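/- arXiv:2012.06553 — 13 statements merged into one kernel-verified Lean document; each statement's English description precedes it below -/
import Mathlib

section
/- Let f : ℝ → ℝ, let (l3, l2, l1, m, r1, r2, r3) be an extended bracket for f, and let t ∈ (l1, m) ∪ (m, r1) be a point with f(t) ≠ f(m). Define the 7-tuple x' by: x' = (l3, l2, l1, t, m, r1, r2) if t < m and f(t) < f(m); x' = (l2, l1, m, t, r1, r2, r3) if t > m and f(t) < f(m); x' = (l3, l2, l1, m, t, r1, r2) if t > m and f(t) > f(m); x' = (l2, l1, t, m, r1, r2, r3) if t < m and f(t) > f(m). Then x' is again an extended bracket for f, and the inner diameter of x' is strictly smaller than r1 − l1. -/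
/-- An extended bracket for `f` is a 7-tuple `(l3, l2, l1, m, r1, r2, r3)` with
`l3 < l2 < l1 < m < r1 < r2 < r3`, `f l1 ≥ f m` and `f m ≤ f r1`. -/
def ExtBracket (f : ℝ → ℝ) (x : ℝ × ℝ × ℝ × ℝ × ℝ × ℝ × ℝ) : Prop :=
  x.1 < x.2.1 ∧ x.2.1 < x.2.2.1 ∧ x.2.2.1 < x.2.2.2.1 ∧ x.2.2.2.1 < x.2.2.2.2.1 ∧
  x.2.2.2.2.1 < x.2.2.2.2.2.1 ∧ x.2.2.2.2.2.1 < x.2.2.2.2.2.2 ∧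
  f x.2.2.1 ≥ f x.2.2.2.1 ∧ f x.2.2.2.1 ≤ f x.2.2.2.2.1

/-- The inner diameter `r1 - l1` of an extended bracket. -/
def innerDiam (x : ℝ × ℝ × ℝ × ℝ × ℝ × ℝ × ℝ) : ℝ := x.2.2.2.2.1 - x.2.2.1

/-- The SUPM bracket update. -/
noncomputable def update (f : ℝ → ℝ) (l3 l2 l1 m r1 r2 r3 t : ℝ) :
    ℝ × ℝ × ℝ × ℝ × ℝ × ℝ × ℝ :=
  if t < m then
    (if f t < f m then (l3, l2, l1, t, m, r1, r2) else (l2, l1, t, m, r1, r2, r3))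
  else
    (if f t < f m then (l2, l1, m, t, r1, r2, r3) else (l3, l2, l1, m, t, r1, r2))

theorem stmt0 (f : ℝ → ℝ) (l3 l2 l1 m r1 r2 r3 t : ℝ)
    (hx : ExtBracket f (l3, l2, l1, m, r1, r2, r3))
    (ht : t ∈ Set.Ioo l1 m ∪ Set.Ioo m r1)
    (hft : f t ≠ f m) :
    ExtBracket f (update f l3 l2 l1 m r1 r2 r3 t) ∧
      innerDiam (update f l3 l2 l1 m r1 r2 r3 t) < r1 - l1 := by
  obtain ⟨h1, h2, h3, h4, h5, h6, h7, h8⟩ := hx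
  simp only [Set.mem_union, Set.mem_Ioo] at ht
  have htne : t ≠ m := fun h => by subst h; cases ht <;> simp_all
  unfold update innerDiam ExtBracket
  rcases ht with ⟨htl, htm⟩ | ⟨htm, htr⟩
  · rw [if_pos htm]
    rcases lt_or_gt_of_ne hft with hlt | hgt
    · rw [if_pos hlt]
      refine ⟨⟨h1, h2, htl, htm, h4, h5, le_trans hlt.le h7, hlt.le⟩, by linarith⟩
    · rw [if_neg (not_lt.mpr hgt.le)]
      refine ⟨⟨h2, htl, htm, h4, h5, h6, hgt.le, h8⟩, by linarith⟩
  · rw [if_neg (not_lt.mpr htm.le)]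
    rcases lt_or_gt_of_ne hft with hlt | hgt
    · rw [if_pos hlt]
      refine ⟨⟨h2, h3, htm, htr, h5, h6, not_lt.mp (fun h => absurd hlt (not_lt.mpr h.le)), hlt.le.trans h8⟩, by linarith⟩
    · rw [if_neg (not_lt.mpr hgt.le)]
      refine ⟨⟨h1, h2, h3, htm, htr, h5, h7, hgt.le⟩, by linarith⟩
end

section
/- Let f_L, f_R : ℝ → ℝ be twice continuously differentiable with f_L'' Lipschitz with constant M_L and f_R'' Lipschitz with constant M_R. Let l3 < l2 < l1 < m < r1 < r2 < r3 be reals, let α > max(M_L, M_R)/2, and let h = max(r3 − l1, r1 − l3). Then q^R(x) < f_R(x) for all x ∈ [l1, r1), and q^L(x) < f_L(x) for all x ∈ (l1, r1]. -/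
/-- First divided difference. -/
noncomputable def dd2 (φ : ℝ → ℝ) (a b : ℝ) : ℝ := (φ a - φ b) / (a - b)

/-- Second divided difference. -/
noncomputable def dd3 (φ : ℝ → ℝ) (a b c : ℝ) : ℝ := (dd2 φ a b - dd2 φ a c) / (b - c)

/-- The left model quadratic. -/
noncomputable def qL (fL : ℝ → ℝ) (l1 l2 l3 α h x : ℝ) : ℝ :=
  fL l1 + dd2 fL l1 l2 * (x - l1) + (dd3 fL l1 l2 l3 - α * h) * (x - l1) * (x - l2)

/-- The right model quadratic. -/
noncomputable def qR (fR : ℝ → ℝ) (r1 r2 r3 α h x : ℝ) : ℝ :=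
  fR r1 + dd2 fR r1 r2 * (x - r1) + (dd3 fR r1 r2 r3 - α * h) * (x - r1) * (x - r2)

/-- Newton interpolation remainder identity. -/
lemma newton_aux (f : ℝ → ℝ) {a b c : ℝ} (hab : a ≠ b) (hac : a ≠ c) (hbc : b ≠ c) :
    f c = f a + dd2 f a b * (c - a) + dd3 f a b c * (c - a) * (c - b) := by
  have h1 : a - b ≠ 0 := sub_ne_zero.mpr hab
  have h2 : a - c ≠ 0 := sub_ne_zero.mpr hac
  have h3 : b - c ≠ 0 := sub_ne_zero.mpr hbc
  unfold dd3 dd2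
  field_simp
  ring

/-- Symmetric closed form of the second divided difference. -/
lemma dd3_form_aux (f : ℝ → ℝ) {a b c : ℝ} (hab : a ≠ b) (hac : a ≠ c) (hbc : b ≠ c) :
    dd3 f a b c = f a / ((a-b)*(a-c)) + f b / ((b-a)*(b-c)) + f c / ((c-a)*(c-b)) := by
  have h1 : a - b ≠ 0 := sub_ne_zero.mpr hab
  have h2 : a - c ≠ 0 := sub_ne_zero.mpr hac
  have h3 : b - c ≠ 0 := sub_ne_zero.mpr hbc
  have h4 : b - a ≠ 0 := sub_ne_zero.mpr hab.symm
  have h5 : c - a ≠ 0 := sub_ne_zero.mpr hac.symm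
  have h6 : c - b ≠ 0 := sub_ne_zero.mpr hbc.symm
  unfold dd3 dd2
  field_simp
  ring

/-- dd3 is invariant under cycling the last argument to the front. -/
lemma dd3_cycle_aux (f : ℝ → ℝ) {a b c : ℝ} (hab : a ≠ b) (hac : a ≠ c) (hbc : b ≠ c) :
    dd3 f a b c = dd3 f c a b := by
  rw [dd3_form_aux f hab hac hbc, dd3_form_aux f hac.symm hbc.symm hab]
  have h1 : a - b ≠ 0 := sub_ne_zero.mpr hab
  have h2 : a - c ≠ 0 := sub_ne_zero.mpr hac
  have h3 : b - c ≠ 0 := sub_ne_zero.mpr hbc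
  have h4 : b - a ≠ 0 := sub_ne_zero.mpr hab.symm
  have h5 : c - a ≠ 0 := sub_ne_zero.mpr hac.symm
  have h6 : c - b ≠ 0 := sub_ne_zero.mpr hbc.symm
  field_simp
  ring

/-- dd3 is invariant under swapping the first two arguments. -/
lemma dd3_swap12_aux (f : ℝ → ℝ) {a b c : ℝ} (hab : a ≠ b) (hac : a ≠ c) (hbc : b ≠ c) :
    dd3 f a b c = dd3 f b a c := by
  rw [dd3_form_aux f hab hac hbc, dd3_form_aux f hab.symm hbc hac]
  have h1 : a - b ≠ 0 := sub_ne_zero.mpr hab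
  have h2 : a - c ≠ 0 := sub_ne_zero.mpr hac
  have h3 : b - c ≠ 0 := sub_ne_zero.mpr hbc
  have h4 : b - a ≠ 0 := sub_ne_zero.mpr hab.symm
  have h5 : c - a ≠ 0 := sub_ne_zero.mpr hac.symm
  have h6 : c - b ≠ 0 := sub_ne_zero.mpr hbc.symm
  field_simp
  ring

/-- dd3 is invariant under swapping the outer arguments. -/
lemma dd3_swap13_aux (f : ℝ → ℝ) {a b c : ℝ} (hab : a ≠ b) (hac : a ≠ c) (hbc : b ≠ c) :
    dd3 f a b c = dd3 f c b a := by
  rw [dd3_form_aux f hab hac hbc, dd3_form_aux f hbc.symm hac.symm hab.symm]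
  have h1 : a - b ≠ 0 := sub_ne_zero.mpr hab
  have h2 : a - c ≠ 0 := sub_ne_zero.mpr hac
  have h3 : b - c ≠ 0 := sub_ne_zero.mpr hbc
  have h4 : b - a ≠ 0 := sub_ne_zero.mpr hab.symm
  have h5 : c - a ≠ 0 := sub_ne_zero.mpr hac.symm
  have h6 : c - b ≠ 0 := sub_ne_zero.mpr hbc.symm
  field_simp
  ring

/-- Mean value theorem for the second divided difference. -/
lemma dd3_mvt_aux (f : ℝ → ℝ) (hf : ContDiff ℝ 2 f) {a b c : ℝ} (hab : a < b) (hbc : b < c) :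
    ∃ ξ ∈ Set.Icc a c, deriv (deriv f) ξ = 2 * dd3 f a b c := by
  have hf1 : ContDiff ℝ 1 (deriv f) := by
    rw [show (2 : WithTop ℕ∞) = 1 + 1 from by norm_num, contDiff_succ_iff_deriv] at hf
    exact hf.2.2
  have hd : Differentiable ℝ f := by
    rw [show (2 : WithTop ℕ∞) = 1 + 1 from by norm_num, contDiff_succ_iff_deriv] at hf
    exact hf.1
  have hd' : Differentiable ℝ (deriv f) := hf1.differentiable one_ne_zero
  set d := dd2 f a b with hdd
  set K := dd3 f a b c with hK
  set g : ℝ → ℝ := fun x => f x - (f a + d * (x - a) + K * (x - a) * (x - b)) with hg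
  set g' : ℝ → ℝ := fun x => deriv f x - (d + (K * (x - b) + K * (x - a))) with hg'
  have hgd : ∀ x : ℝ, HasDerivAt g (g' x) x := by
    intro x
    have h1 : HasDerivAt (fun y : ℝ => y - a) 1 x := (hasDerivAt_id x).sub_const a
    have h2 : HasDerivAt (fun y : ℝ => y - b) 1 x := (hasDerivAt_id x).sub_const b
    have hp : HasDerivAt (fun y : ℝ => f a + d * (y - a) + K * (y - a) * (y - b))
        (d + (K * (x - b) + K * (x - a))) x := by
      have := ((h1.const_mul d).const_add (f a)).add (((h1.const_mul K).mul h2))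
      exact this.congr_deriv (by ring)
    exact (hd x).hasDerivAt.sub hp
  have hgcont : Continuous g := by
    apply hd.continuous.sub
    continuity
  have hg'cont : Continuous g' := by
    apply hf1.continuous.sub
    continuity
  have hga : g a = 0 := by simp [hg]
  have hgb : g b = 0 := by
    have h1 : a - b ≠ 0 := sub_ne_zero.mpr hab.ne
    simp only [hg, hdd]
    unfold dd2
    field_simp
    ring
  have hgc0 : g c = 0 := by
    have := newton_aux f hab.ne (hab.trans hbc).ne hbc.ne
    simp only [hg]
    linarith [this]
  obtain ⟨ξ1, hξ1, hgξ1⟩ := exists_hasDerivAt_eq_zero hab hgcont.continuousOn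
    (hga.trans hgb.symm) (fun x _ => hgd x)
  obtain ⟨ξ2, hξ2, hgξ2⟩ := exists_hasDerivAt_eq_zero hbc hgcont.continuousOn
    (hgb.trans hgc0.symm) (fun x _ => hgd x)
  have h12 : ξ1 < ξ2 := hξ1.2.trans hξ2.1
  have hg'd : ∀ x : ℝ, HasDerivAt g' (deriv (deriv f) x - 2 * K) x := by
    intro x
    have h1 : HasDerivAt (fun y : ℝ => y - a) 1 x := (hasDerivAt_id x).sub_const a
    have h2 : HasDerivAt (fun y : ℝ => y - b) 1 x := (hasDerivAt_id x).sub_const b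
    have hp : HasDerivAt (fun y : ℝ => d + (K * (y - b) + K * (y - a))) (2 * K) x := by
      have := ((h2.const_mul K).add (h1.const_mul K)).const_add d
      exact this.congr_deriv (by ring)
    exact (hd' x).hasDerivAt.sub hp
  obtain ⟨ξ, hξ, hval⟩ := exists_hasDerivAt_eq_zero h12 hg'cont.continuousOn
    (hgξ1.trans hgξ2.symm) (fun x _ => hg'd x)
  refine ⟨ξ, ⟨?_, ?_⟩, by linarith [hval]⟩
  · linarith [hξ1.1, hξ.1]
  · linarith [hξ.2, hξ2.2]

theorem stmt1 (fL fR : ℝ → ℝ) (ML MR : ℝ)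
    (hfL : ContDiff ℝ 2 fL) (hfR : ContDiff ℝ 2 fR)
    (hLipL : ∀ x y : ℝ, |deriv (deriv fL) x - deriv (deriv fL) y| ≤ ML * |x - y|)
    (hLipR : ∀ x y : ℝ, |deriv (deriv fR) x - deriv (deriv fR) y| ≤ MR * |x - y|)
    (l3 l2 l1 m r1 r2 r3 : ℝ)
    (h1 : l3 < l2) (h2 : l2 < l1) (h3 : l1 < m) (h4 : m < r1) (h5 : r1 < r2) (h6 : r2 < r3)
    (α : ℝ) (hα : α > max ML MR / 2) (h : ℝ) (hh : h = max (r3 - l1) (r1 - l3)) :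
    (∀ x ∈ Set.Ico l1 r1, qR fR r1 r2 r3 α h x < fR x) ∧
    (∀ x ∈ Set.Ioc l1 r1, qL fL l1 l2 l3 α h x < fL x) := by
  have hML : 0 ≤ ML := by
    have h01 := hLipL 0 1
    have habs : (0:ℝ) ≤ |deriv (deriv fL) 0 - deriv (deriv fL) 1| := abs_nonneg _
    have : |(0:ℝ) - 1| = 1 := by norm_num
    rw [this] at h01
    linarith
  have hMR : 0 ≤ MR := by
    have h01 := hLipR 0 1
    have habs : (0:ℝ) ≤ |deriv (deriv fR) 0 - deriv (deriv fR) 1| := abs_nonneg _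
    have : |(0:ℝ) - 1| = 1 := by norm_num
    rw [this] at h01
    linarith
  have hαL : α > ML / 2 := by
    have := le_max_left ML MR
    linarith
  have hαR : α > MR / 2 := by
    have := le_max_right ML MR
    linarith
  have hh1 : r3 - l1 ≤ h := hh ▸ le_max_left _ _
  have hh2 : r1 - l3 ≤ h := hh ▸ le_max_right _ _
  have hhpos : 0 < h := by linarith
  constructor
  · -- right part
    intro x hx
    obtain ⟨hxl, hxr⟩ := hx
    have hne1 : r1 ≠ r2 := h5.ne
    have hne2 : r1 ≠ x := (hxr.ne).symm
    have hne3 : r2 ≠ x := (hxr.trans h5).ne.symm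
    have key : fR x - qR fR r1 r2 r3 α h x =
        (dd3 fR r1 r2 x - dd3 fR r1 r2 r3 + α * h) * ((x - r1) * (x - r2)) := by
      unfold qR
      rw [newton_aux fR hne1 hne2 hne3]
      ring
    have hsym : dd3 fR r1 r2 x = dd3 fR x r1 r2 :=
      (dd3_cycle_aux fR hne1 hne2 hne3).symm ▸ rfl
    obtain ⟨ξ1, hξ1mem, hξ1⟩ := dd3_mvt_aux fR hfR hxr h5
    obtain ⟨ξ2, hξ2mem, hξ2⟩ := dd3_mvt_aux fR hfR h5 h6
    have hdiff : dd3 fR r1 r2 x - dd3 fR r1 r2 r3 =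
        (deriv (deriv fR) ξ1 - deriv (deriv fR) ξ2) / 2 := by
      rw [hsym]
      linarith [hξ1, hξ2]
    have habs : |ξ1 - ξ2| ≤ h := by
      rw [abs_sub_le_iff]
      constructor
      · linarith [hξ1mem.1, hξ1mem.2, hξ2mem.1, hξ2mem.2]
      · linarith [hξ1mem.1, hξ1mem.2, hξ2mem.1, hξ2mem.2]
    have hb : |deriv (deriv fR) ξ1 - deriv (deriv fR) ξ2| ≤ MR * h := by
      calc |deriv (deriv fR) ξ1 - deriv (deriv fR) ξ2| ≤ MR * |ξ1 - ξ2| := hLipR ξ1 ξ2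
        _ ≤ MR * h := mul_le_mul_of_nonneg_left habs hMR
    have hlb : -(MR * h) ≤ deriv (deriv fR) ξ1 - deriv (deriv fR) ξ2 := by
      have := abs_le.mp hb
      linarith [this.1]
    have hC : 0 < dd3 fR r1 r2 x - dd3 fR r1 r2 r3 + α * h := by
      rw [hdiff]
      nlinarith [mul_pos (show (0:ℝ) < α - MR / 2 by linarith) hhpos]
    have hP : 0 < (x - r1) * (x - r2) :=
      mul_pos_of_neg_of_neg (by linarith) (by linarith)
    linarith [mul_pos hC hP, key]
  · -- left part
    intro x hx
    obtain ⟨hxl, hxr⟩ := hx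
    have hne1 : l1 ≠ l2 := h2.ne'
    have hne2 : l1 ≠ x := hxl.ne
    have hne3 : l2 ≠ x := (h2.trans hxl).ne
    have key : fL x - qL fL l1 l2 l3 α h x =
        (dd3 fL l1 l2 x - dd3 fL l1 l2 l3 + α * h) * ((x - l1) * (x - l2)) := by
      unfold qL
      rw [newton_aux fL hne1 hne2 hne3]
      ring
    have hsym1 : dd3 fL l1 l2 x = dd3 fL l2 l1 x := dd3_swap12_aux fL hne1 hne2 hne3
    have hsym2 : dd3 fL l1 l2 l3 = dd3 fL l3 l2 l1 :=
      dd3_swap13_aux fL h2.ne' (h1.trans h2).ne' h1.ne'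
    obtain ⟨ξ1, hξ1mem, hξ1⟩ := dd3_mvt_aux fL hfL h2 hxl
    obtain ⟨ξ2, hξ2mem, hξ2⟩ := dd3_mvt_aux fL hfL h1 h2
    have hdiff : dd3 fL l1 l2 x - dd3 fL l1 l2 l3 =
        (deriv (deriv fL) ξ1 - deriv (deriv fL) ξ2) / 2 := by
      rw [hsym1, hsym2]
      linarith [hξ1, hξ2]
    have habs : |ξ1 - ξ2| ≤ h := by
      rw [abs_sub_le_iff]
      constructor
      · linarith [hξ1mem.1, hξ1mem.2, hξ2mem.1, hξ2mem.2]
      · linarith [hξ1mem.1, hξ1mem.2, hξ2mem.1, hξ2mem.2]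
    have hb : |deriv (deriv fL) ξ1 - deriv (deriv fL) ξ2| ≤ ML * h := by
      calc |deriv (deriv fL) ξ1 - deriv (deriv fL) ξ2| ≤ ML * |ξ1 - ξ2| := hLipL ξ1 ξ2
        _ ≤ ML * h := mul_le_mul_of_nonneg_left habs hML
    have hlb : -(ML * h) ≤ deriv (deriv fL) ξ1 - deriv (deriv fL) ξ2 := by
      have := abs_le.mp hb
      linarith [this.1]
    have hC : 0 < dd3 fL l1 l2 x - dd3 fL l1 l2 l3 + α * h := by
      rw [hdiff]
      nlinarith [mul_pos (show (0:ℝ) < α - ML / 2 by linarith) hhpos]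
    have hP : 0 < (x - l1) * (x - l2) :=
      mul_pos (by linarith) (by linarith)
    linarith [mul_pos hC hP, key]
end

section
/- Let f_L, f_R : ℝ → ℝ be twice continuously differentiable with f_L'' Lipschitz with constant M_L and f_R'' Lipschitz with constant M_R, and let f(y) = max(f_L(y), f_R(y)) for all y ∈ ℝ. Let (l3, l2, l1, m, r1, r2, r3) be an extended bracket for f with f(l1) = f_L(l1), f(l2) = f_L(l2), f(l3) = f_L(l3), f(r1) = f_R(r1), f(r2) = f_R(r2), f(r3) = f_R(r3). Let α > max(M_L, M_R)/2 and h = max(r3 − l1, r1 − l3), and set Q(x) = max(q^L(x), q^R(x)). Then every minimizer of Q over [l1, r1] lies in the open interval (l1, r1); that is, if x* ∈ [l1, r1] satisfies Q(x*) ≤ Q(y) for all y ∈ [l1, r1], then l1 < x* < r1. -/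
lemma dd3_eq (φ : ℝ → ℝ) {a b c : ℝ} (hab : a ≠ b) (hac : a ≠ c) (hbc : b ≠ c) :
    dd3 φ a b c = (φ a * (b - c) - φ b * (a - c) + φ c * (a - b)) / ((a - b) * ((a - c) * (b - c))) := by
  have h1 : a - b ≠ 0 := sub_ne_zero.mpr hab
  have h2 : a - c ≠ 0 := sub_ne_zero.mpr hac
  have h3 : b - c ≠ 0 := sub_ne_zero.mpr hbc
  unfold dd3 dd2
  field_simp
  ring

lemma dd3_swap12 (φ : ℝ → ℝ) {a b c : ℝ} (hab : a ≠ b) (hac : a ≠ c) (hbc : b ≠ c) :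
    dd3 φ a b c = dd3 φ b a c := by
  have h1 : a - b ≠ 0 := sub_ne_zero.mpr hab
  have h2 : a - c ≠ 0 := sub_ne_zero.mpr hac
  have h3 : b - c ≠ 0 := sub_ne_zero.mpr hbc
  have h1' : b - a ≠ 0 := sub_ne_zero.mpr hab.symm
  rw [dd3_eq φ hab hac hbc, dd3_eq φ hab.symm hbc hac]
  rw [div_eq_div_iff (mul_ne_zero h1 (mul_ne_zero h2 h3)) (mul_ne_zero h1' (mul_ne_zero h3 h2))]
  ring

lemma dd3_swap13 (φ : ℝ → ℝ) {a b c : ℝ} (hab : a ≠ b) (hac : a ≠ c) (hbc : b ≠ c) :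
    dd3 φ a b c = dd3 φ c b a := by
  have h1 : a - b ≠ 0 := sub_ne_zero.mpr hab
  have h2 : a - c ≠ 0 := sub_ne_zero.mpr hac
  have h3 : b - c ≠ 0 := sub_ne_zero.mpr hbc
  have h2' : c - a ≠ 0 := sub_ne_zero.mpr hac.symm
  have h3' : c - b ≠ 0 := sub_ne_zero.mpr hbc.symm
  have h1' : b - a ≠ 0 := sub_ne_zero.mpr hab.symm
  rw [dd3_eq φ hab hac hbc, dd3_eq φ hbc.symm hac.symm hab.symm]
  rw [div_eq_div_iff (mul_ne_zero h1 (mul_ne_zero h2 h3)) (mul_ne_zero h3' (mul_ne_zero h2' h1'))]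
  ring

lemma dd3_rot (φ : ℝ → ℝ) {a b c : ℝ} (hab : a ≠ b) (hac : a ≠ c) (hbc : b ≠ c) :
    dd3 φ a b c = dd3 φ c a b := by
  have h1 : a - b ≠ 0 := sub_ne_zero.mpr hab
  have h2 : a - c ≠ 0 := sub_ne_zero.mpr hac
  have h3 : b - c ≠ 0 := sub_ne_zero.mpr hbc
  have h2' : c - a ≠ 0 := sub_ne_zero.mpr hac.symm
  have h3' : c - b ≠ 0 := sub_ne_zero.mpr hbc.symm
  rw [dd3_eq φ hab hac hbc, dd3_eq φ hac.symm hbc.symm hab]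
  rw [div_eq_div_iff (mul_ne_zero h1 (mul_ne_zero h2 h3)) (mul_ne_zero h2' (mul_ne_zero h3' h1))]
  ring

/-- Newton interpolation identity. -/
lemma newton (φ : ℝ → ℝ) {a b x : ℝ} (hab : a ≠ b) (hax : a ≠ x) (hbx : b ≠ x) :
    φ x = φ a + dd2 φ a b * (x - a) + dd3 φ a b x * ((x - a) * (x - b)) := by
  have h1 : a - b ≠ 0 := sub_ne_zero.mpr hab
  have h2 : a - x ≠ 0 := sub_ne_zero.mpr hax
  have h3 : b - x ≠ 0 := sub_ne_zero.mpr hbx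
  unfold dd3 dd2
  field_simp
  ring

/-- Mean value theorem for second divided differences. -/
lemma dd3_mvt (φ : ℝ → ℝ) (hφ : ContDiff ℝ 2 φ) {a b c : ℝ} (hab : a < b) (hbc : b < c) :
    ∃ ξ ∈ Set.Ioo a c, dd3 φ a b c = deriv (deriv φ) ξ / 2 := by
  have h2 : ContDiff ℝ ((1:ℕ∞)+1) φ := hφ
  have hd1 := (contDiff_succ_iff_deriv.mp h2).2.2
  have hφ' : Differentiable ℝ φ := (contDiff_succ_iff_deriv.mp h2).1
  have hd1' : Differentiable ℝ (deriv φ) := hd1.differentiable (by simp)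
  set C1 := dd2 φ a b with hC1
  set C2 := dd3 φ a b c with hC2
  set g : ℝ → ℝ := fun x => φ x - (φ a + C1 * (x - a) + C2 * ((x - a) * (x - b))) with hg
  set g1 : ℝ → ℝ := fun x => deriv φ x - (C1 + C2 * ((x - a) + (x - b))) with hg1
  have hderiv : ∀ x : ℝ, deriv g x = g1 x := by
    intro x
    have hp : HasDerivAt (fun x => φ a + C1 * (x - a) + C2 * ((x - a) * (x - b)))
        (C1 + C2 * ((x - a) + (x - b))) x := by
      have ha : HasDerivAt (fun x : ℝ => x - a) 1 x := (hasDerivAt_id x).sub_const a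
      have hb : HasDerivAt (fun x : ℝ => x - b) 1 x := (hasDerivAt_id x).sub_const b
      have := (((ha.const_mul C1).const_add (φ a)).add ((ha.mul hb).const_mul C2))
      exact this.congr_deriv (by ring)
    exact (((hφ' x).hasDerivAt).sub hp).deriv
  have hgc : Continuous g := by
    apply hφ'.continuous.sub
    continuity
  have hg1c : Continuous g1 := by
    apply (hd1.continuous).sub
    continuity
  have hab' : a ≠ b := ne_of_lt hab
  have hbc' : b ≠ c := ne_of_lt hbc
  have hac' : a ≠ c := ne_of_lt (hab.trans hbc)
  have hga : g a = 0 := by simp [hg]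
  have hgb : g b = 0 := by
    have h1 : a - b ≠ 0 := sub_ne_zero.mpr hab'
    simp only [hg, hC1, dd2]
    field_simp
    ring
  have hgc0 : g c = 0 := by
    have := newton φ hab' hac' hbc'
    simp only [hg, hC1, hC2]
    linarith [this]
  obtain ⟨u, hu, hdu⟩ := exists_deriv_eq_zero hab (hgc.continuousOn) (hga.trans hgb.symm)
  obtain ⟨v, hv, hdv⟩ := exists_deriv_eq_zero hbc (hgc.continuousOn) (hgb.trans hgc0.symm)
  have huv : u < v := lt_trans hu.2 hv.1
  have hg1u : g1 u = 0 := (hderiv u) ▸ hdu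
  have hg1v : g1 v = 0 := (hderiv v) ▸ hdv
  obtain ⟨ξ, hξ, hdξ⟩ := exists_deriv_eq_zero huv (hg1c.continuousOn) (hg1u.trans hg1v.symm)
  refine ⟨ξ, ⟨lt_trans hu.1 hξ.1, lt_trans hξ.2 hv.2⟩, ?_⟩
  have : deriv g1 ξ = deriv (deriv φ) ξ - 2 * C2 := by
    have hp : HasDerivAt (fun x : ℝ => C1 + C2 * ((x - a) + (x - b))) (2 * C2) ξ := by
      have ha : HasDerivAt (fun x : ℝ => x - a) 1 ξ := (hasDerivAt_id ξ).sub_const a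
      have hb : HasDerivAt (fun x : ℝ => x - b) 1 ξ := (hasDerivAt_id ξ).sub_const b
      have := ((ha.add hb).const_mul C2).const_add C1
      exact this.congr_deriv (by ring)
    exact (((hd1' ξ).hasDerivAt).sub hp).deriv
  rw [this] at hdξ
  linarith

/-- Key estimate: the left model quadratic strictly underestimates fL to the right of l1. -/
lemma qL_lt (φ : ℝ → ℝ) (hφ : ContDiff ℝ 2 φ) (M : ℝ)
    (hLip : ∀ x y : ℝ, |deriv (deriv φ) x - deriv (deriv φ) y| ≤ M * |x - y|)
    (α h l1 l2 l3 x : ℝ) (h1 : l3 < l2) (h2 : l2 < l1) (h3 : l1 < x)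
    (hcap : x - l3 ≤ h) (hh0 : 0 < h) (hα : M / 2 < α) :
    qL φ l1 l2 l3 α h x < φ x := by
  have hM0 : 0 ≤ M := by
    have := hLip 1 0
    simp at this
    linarith [abs_nonneg (deriv (deriv φ) 1 - deriv (deriv φ) 0)]
  obtain ⟨ξ1, hξ1, e1⟩ := dd3_mvt φ hφ h2 h3
  obtain ⟨ξ2, hξ2, e2⟩ := dd3_mvt φ hφ h1 h2
  have he1 : dd3 φ l1 l2 x = deriv (deriv φ) ξ1 / 2 := by
    rw [dd3_swap12 φ (ne_of_lt h2).symm (ne_of_lt h3) (ne_of_lt (h2.trans h3))]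
    exact e1
  have he2 : dd3 φ l1 l2 l3 = deriv (deriv φ) ξ2 / 2 := by
    rw [dd3_swap13 φ (ne_of_lt h2).symm (ne_of_lt (h1.trans h2)).symm (ne_of_lt h1).symm]
    exact e2
  have hdist : |ξ1 - ξ2| ≤ h := by
    rw [abs_sub_le_iff]
    constructor <;> [skip; skip] <;>
      · obtain ⟨a1, a2⟩ := hξ1; obtain ⟨b1, b2⟩ := hξ2; linarith
  have hb := hLip ξ1 ξ2
  have hb2 : M * |ξ1 - ξ2| ≤ M * h := mul_le_mul_of_nonneg_left hdist hM0
  have hb3 : deriv (deriv φ) ξ1 - deriv (deriv φ) ξ2 ≥ -(M * h) := by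
    have := neg_abs_le (deriv (deriv φ) ξ1 - deriv (deriv φ) ξ2)
    linarith
  have hαh : M / 2 * h < α * h := mul_lt_mul_of_pos_right hα hh0
  have hkey : 0 < dd3 φ l1 l2 x - dd3 φ l1 l2 l3 + α * h := by
    rw [he1, he2]; linarith
  have hid := newton φ (ne_of_lt h2).symm (ne_of_lt h3) (ne_of_lt (h2.trans h3))
  have hprod : 0 < (x - l1) * (x - l2) := mul_pos (by linarith) (by linarith)
  have := mul_pos hkey hprod
  simp only [qL]
  nlinarith [this, hid]

/-- Key estimate: the right model quadratic strictly underestimates fR to the left of r1. -/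
lemma qR_lt (φ : ℝ → ℝ) (hφ : ContDiff ℝ 2 φ) (M : ℝ)
    (hLip : ∀ x y : ℝ, |deriv (deriv φ) x - deriv (deriv φ) y| ≤ M * |x - y|)
    (α h r1 r2 r3 x : ℝ) (h1 : r1 < r2) (h2 : r2 < r3) (h3 : x < r1)
    (hcap : r3 - x ≤ h) (hh0 : 0 < h) (hα : M / 2 < α) :
    qR φ r1 r2 r3 α h x < φ x := by
  have hM0 : 0 ≤ M := by
    have := hLip 1 0
    simp at this
    linarith [abs_nonneg (deriv (deriv φ) 1 - deriv (deriv φ) 0)]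
  obtain ⟨ξ1, hξ1, e1⟩ := dd3_mvt φ hφ h3 h1
  obtain ⟨ξ2, hξ2, e2⟩ := dd3_mvt φ hφ h1 h2
  have he1 : dd3 φ r1 r2 x = deriv (deriv φ) ξ1 / 2 := by
    rw [dd3_rot φ (ne_of_lt h1) (ne_of_lt h3).symm (ne_of_lt (h3.trans h1)).symm]
    exact e1
  have he2 : dd3 φ r1 r2 r3 = deriv (deriv φ) ξ2 / 2 := e2
  have hdist : |ξ1 - ξ2| ≤ h := by
    rw [abs_sub_le_iff]
    constructor <;> [skip; skip] <;>
      · obtain ⟨a1, a2⟩ := hξ1; obtain ⟨b1, b2⟩ := hξ2; linarith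
  have hb := hLip ξ1 ξ2
  have hb2 : M * |ξ1 - ξ2| ≤ M * h := mul_le_mul_of_nonneg_left hdist hM0
  have hb3 : deriv (deriv φ) ξ1 - deriv (deriv φ) ξ2 ≥ -(M * h) := by
    have := neg_abs_le (deriv (deriv φ) ξ1 - deriv (deriv φ) ξ2)
    linarith
  have hαh : M / 2 * h < α * h := mul_lt_mul_of_pos_right hα hh0
  have hkey : 0 < dd3 φ r1 r2 x - dd3 φ r1 r2 r3 + α * h := by
    rw [he1, he2]; linarith
  have hid := newton φ (ne_of_lt h1) (ne_of_lt h3).symm (ne_of_lt (h3.trans h1)).symm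
  have hprod : 0 < (x - r1) * (x - r2) :=
    mul_pos_of_neg_of_neg (by linarith) (by linarith)
  have := mul_pos hkey hprod
  simp only [qR]
  nlinarith [this, hid]

theorem stmt2 (fL fR f : ℝ → ℝ) (ML MR : ℝ)
    (hfL : ContDiff ℝ 2 fL) (hfR : ContDiff ℝ 2 fR)
    (hLipL : ∀ x y : ℝ, |deriv (deriv fL) x - deriv (deriv fL) y| ≤ ML * |x - y|)
    (hLipR : ∀ x y : ℝ, |deriv (deriv fR) x - deriv (deriv fR) y| ≤ MR * |x - y|)
    (hf : ∀ y : ℝ, f y = max (fL y) (fR y))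
    (l3 l2 l1 m r1 r2 r3 : ℝ)
    (h1 : l3 < l2) (h2 : l2 < l1) (h3 : l1 < m) (h4 : m < r1) (h5 : r1 < r2) (h6 : r2 < r3)
    (hbr1 : f l1 ≥ f m) (hbr2 : f m ≤ f r1)
    (hl1 : f l1 = fL l1) (hl2 : f l2 = fL l2) (hl3 : f l3 = fL l3)
    (hr1 : f r1 = fR r1) (hr2 : f r2 = fR r2) (hr3 : f r3 = fR r3)
    (α : ℝ) (hα : α > max ML MR / 2) (h : ℝ) (hh : h = max (r3 - l1) (r1 - l3))
    (Q : ℝ → ℝ)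
    (hQ : ∀ x : ℝ, Q x = max (qL fL l1 l2 l3 α h x) (qR fR r1 r2 r3 α h x)) :
    ∀ xstar ∈ Set.Icc l1 r1, (∀ y ∈ Set.Icc l1 r1, Q xstar ≤ Q y) →
      xstar ∈ Set.Ioo l1 r1 := by
  intro xstar hxs hmin
  have hhL : r3 - l1 ≤ h := hh ▸ le_max_left _ _
  have hhR : r1 - l3 ≤ h := hh ▸ le_max_right _ _
  have hh0 : 0 < h := lt_of_lt_of_le (by linarith : (0:ℝ) < r1 - l3) hhR
  have hαL : ML / 2 < α := lt_of_le_of_lt (by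
    have := le_max_left ML MR; linarith) hα
  have hαR : MR / 2 < α := lt_of_le_of_lt (by
    have := le_max_right ML MR; linarith) hα
  -- strict underestimates
  have hqLm : qL fL l1 l2 l3 α h m < fL m :=
    qL_lt fL hfL ML hLipL α h l1 l2 l3 m h1 h2 h3 (by linarith) hh0 hαL
  have hqRm : qR fR r1 r2 r3 α h m < fR m :=
    qR_lt fR hfR MR hLipR α h r1 r2 r3 m h5 h6 h4 (by linarith) hh0 hαR
  have hqRl1 : qR fR r1 r2 r3 α h l1 < fR l1 :=
    qR_lt fR hfR MR hLipR α h r1 r2 r3 l1 h5 h6 (by linarith) (by linarith) hh0 hαR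
  have hqLr1 : qL fL l1 l2 l3 α h r1 < fL r1 :=
    qL_lt fL hfL ML hLipL α h l1 l2 l3 r1 h1 h2 (by linarith) (by linarith) hh0 hαL
  -- values at endpoints
  have hqLl1 : qL fL l1 l2 l3 α h l1 = fL l1 := by simp [qL]
  have hqRr1 : qR fR r1 r2 r3 α h r1 = fR r1 := by simp [qR]
  have hfRl1 : fR l1 ≤ fL l1 := by
    have := hf l1
    rw [hl1] at this
    exact max_eq_left_iff.mp this.symm
  have hfLr1 : fL r1 ≤ fR r1 := by
    have := hf r1
    rw [hr1] at this
    exact max_eq_right_iff.mp this.symm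
  have hQl1 : Q l1 = f l1 := by
    rw [hQ, hl1, hqLl1]
    exact max_eq_left (le_of_lt (lt_of_lt_of_le hqRl1 hfRl1))
  have hQr1 : Q r1 = f r1 := by
    rw [hQ, hr1, hqRr1]
    exact max_eq_right (le_of_lt (lt_of_lt_of_le hqLr1 hfLr1))
  have hQm : Q m < f m := by
    rw [hQ, hf]
    exact max_lt (lt_of_lt_of_le hqLm (le_max_left _ _))
      (lt_of_lt_of_le hqRm (le_max_right _ _))
  have hQms : Q xstar ≤ Q m := hmin m ⟨le_of_lt h3, le_of_lt h4⟩
  have hx1 : Q xstar < Q l1 := by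
    rw [hQl1]
    calc Q xstar ≤ Q m := hQms
    _ < f m := hQm
    _ ≤ f l1 := hbr1
  have hx2 : Q xstar < Q r1 := by
    rw [hQr1]
    calc Q xstar ≤ Q m := hQms
    _ < f m := hQm
    _ ≤ f r1 := hbr2
  refine ⟨lt_of_le_of_ne hxs.1 ?_, lt_of_le_of_ne hxs.2 ?_⟩
  · intro he; rw [← he] at hx1; exact lt_irrefl _ hx1
  · intro he; rw [he] at hx2; exact lt_irrefl _ hx2
end

section
/- Let f_L, f_R : ℝ → ℝ be twice continuously differentiable, let M > 0 with |f_L''(y)| ≤ M and |f_R''(y)| ≤ M for all y ∈ [−ε, ε], suppose f_L'(0) < 0 < f_R'(0), and let 0 < ε < min(−f_L'(0), f_R'(0))/(3M). Let l3 < l2 < l1 < m < r1 < r2 < r3 be reals all lying in (−ε, ε) with f_L(l2) ≥ f_L(l1) and f_R(r2) ≥ f_R(r1), let α > 0 and h = max(r3 − l1, r1 − l3). Then q^L is strictly decreasing on [l1, r1] and q^R is strictly increasing on [l1, r1]. -/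
lemma cd1_deriv (f : ℝ → ℝ) (hf : ContDiff ℝ 2 f) : ContDiff ℝ 1 (deriv f) := by
  have h2 : ContDiff ℝ (1+1 : ℕ) f := by exact_mod_cast hf
  exact (contDiff_succ_iff_deriv.mp (by exact_mod_cast h2)).2.2

lemma dd2_eq (f : ℝ → ℝ) (hf : ContDiff ℝ 2 f) (a b : ℝ) (hab : b < a) :
    ∃ ξ ∈ Set.Ioo b a, dd2 f a b = deriv f ξ := by
  obtain ⟨c, hc, hc'⟩ := exists_deriv_eq_slope f hab (hf.continuous.continuousOn)
    ((hf.differentiable two_ne_zero).differentiableOn)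
  exact ⟨c, hc, by rw [hc', dd2]⟩

lemma dd3_eq_s4 (f : ℝ → ℝ) (hf : ContDiff ℝ 2 f) (a b c : ℝ) (hcb : c < b) (hba : b < a) :
    ∃ η ∈ Set.Ioo c a, dd3 f a b c = deriv (deriv f) η / 2 := by
  have hdf : Differentiable ℝ f := hf.differentiable two_ne_zero
  have hdf' : Differentiable ℝ (deriv f) := (cd1_deriv f hf).differentiable one_ne_zero
  set c2 : ℝ := dd3 f a b c with hc2
  set c1 : ℝ := dd2 f a b with hc1
  set E : ℝ → ℝ := fun x => f x - (f a + c1 * (x - a) + c2 * ((x - a) * (x - b))) with hE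
  have hane : a - b ≠ 0 := by intro hx; linarith [sub_eq_zero.mp hx]
  have hane2 : a - c ≠ 0 := by intro hx; linarith [sub_eq_zero.mp hx]
  have hbne : b - c ≠ 0 := by intro hx; linarith [sub_eq_zero.mp hx]
  have hEa : E a = 0 := by simp [hE]
  have hEb : E b = 0 := by
    simp only [hE, hc1, dd2]
    field_simp
    ring
  have hEc : E c = 0 := by
    simp only [hE, hc2, hc1, dd3, dd2]
    field_simp
    ring
  -- derivative of E
  set D : ℝ → ℝ := fun x => deriv f x - (c1 + c2 * ((x - b) + (x - a))) with hD
  have hEderiv : ∀ x, HasDerivAt E (D x) x := by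
    intro x
    have h1 : HasDerivAt (fun x : ℝ => f a + c1 * (x - a) + c2 * ((x - a) * (x - b)))
        (c1 + c2 * ((x - b) + (x - a))) x := by
      have ha : HasDerivAt (fun x : ℝ => x - a) 1 x := (hasDerivAt_id x).sub_const a
      have hb : HasDerivAt (fun x : ℝ => x - b) 1 x := (hasDerivAt_id x).sub_const b
      have hm : HasDerivAt (fun x : ℝ => (x - a) * (x - b)) ((x - b) + (x - a)) x := by
        have := ha.mul hb
        exact this.congr_deriv (by ring)
      have := ((ha.const_mul c1).const_add (f a)).add (hm.const_mul c2)
      exact this.congr_deriv (by ring)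
    exact (hdf x).hasDerivAt.sub h1
  have hDeq : deriv E = D := funext fun x => (hEderiv x).deriv
  -- Rolle twice
  have hEcont : Continuous E := by
    have : Continuous D := by rw [hD]; exact hdf'.continuous.sub (by fun_prop)
    exact (hdf.continuous).sub (by fun_prop)
  obtain ⟨s1, hs1, hs1'⟩ := exists_deriv_eq_zero (f := E) hcb hEcont.continuousOn (hEc.trans hEb.symm)
  obtain ⟨s2, hs2, hs2'⟩ := exists_deriv_eq_zero (f := E) hba hEcont.continuousOn (hEb.trans hEa.symm)
  rw [hDeq] at hs1' hs2'
  have hs12 : s1 < s2 := lt_trans hs1.2 hs2.1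
  have hDcont : Continuous D := by rw [hD]; exact hdf'.continuous.sub (by fun_prop)
  obtain ⟨η, hη, hη'⟩ := exists_deriv_eq_zero (f := D) hs12 hDcont.continuousOn (hs1'.trans hs2'.symm)
  have hDderiv : ∀ x, HasDerivAt D (deriv (deriv f) x - 2 * c2) x := by
    intro x
    have h1 : HasDerivAt (fun x : ℝ => c1 + c2 * ((x - b) + (x - a))) (2 * c2) x := by
      have ha : HasDerivAt (fun x : ℝ => (x - b) + (x - a)) 2 x := by
        have := ((hasDerivAt_id x).sub_const b).add ((hasDerivAt_id x).sub_const a)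
        exact this.congr_deriv (by norm_num)
      simpa [mul_comm] using (ha.const_mul c2).const_add c1
    exact ((hdf' x).hasDerivAt).sub h1
  have : deriv D η = deriv (deriv f) η - 2 * c2 := (hDderiv η).deriv
  rw [this] at hη'
  refine ⟨η, ⟨?_, ?_⟩, by linarith⟩
  · exact lt_trans hs1.1 hη.1
  · exact lt_trans hη.2 hs2.2

lemma quad_hasDeriv (A B C a b x : ℝ) :
    HasDerivAt (fun x => A + B * (x - a) + C * (x - a) * (x - b))
      (B + C * ((x - b) + (x - a))) x := by
  have ha : HasDerivAt (fun x : ℝ => x - a) 1 x := (hasDerivAt_id x).sub_const a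
  have hb : HasDerivAt (fun x : ℝ => x - b) 1 x := (hasDerivAt_id x).sub_const b
  have := ((ha.const_mul B).const_add A).add ((ha.const_mul C).mul hb)
  exact this.congr_deriv (by ring)

lemma deriv_close (f : ℝ → ℝ) (M ε : ℝ) (hf : ContDiff ℝ 2 f) (hε0 : 0 < ε)
    (hbound : ∀ y ∈ Set.Icc (-ε) ε, |deriv (deriv f) y| ≤ M)
    (ξ : ℝ) (hξ : ξ ∈ Set.Icc (-ε) ε) : |deriv f ξ - deriv f 0| ≤ M * ε := by
  have hdf' : Differentiable ℝ (deriv f) := (cd1_deriv f hf).differentiable one_ne_zero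
  have h0 : (0:ℝ) ∈ Set.Icc (-ε) ε := by constructor <;> linarith
  have := (convex_Icc (-ε) ε).norm_image_sub_le_of_norm_deriv_le (f := deriv f)
    (fun x _ => hdf' x) (fun x hx => by simpa using hbound x hx) h0 hξ
  have habs : ‖ξ - 0‖ ≤ ε := by
    simp only [sub_zero, Real.norm_eq_abs]
    exact abs_le.mpr ⟨hξ.1, hξ.2⟩
  calc |deriv f ξ - deriv f 0| ≤ M * ‖ξ - 0‖ := by simpa using this
    _ ≤ M * ε := by
        have hM0 : 0 ≤ M := le_trans (abs_nonneg _) (hbound 0 h0)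
        exact mul_le_mul_of_nonneg_left habs hM0

set_option maxHeartbeats 1000000 in
theorem stmt4 (fL fR : ℝ → ℝ) (M ε : ℝ)
    (hfL : ContDiff ℝ 2 fL) (hfR : ContDiff ℝ 2 fR)
    (hM : 0 < M)
    (hboundL : ∀ y ∈ Set.Icc (-ε) ε, |deriv (deriv fL) y| ≤ M)
    (hboundR : ∀ y ∈ Set.Icc (-ε) ε, |deriv (deriv fR) y| ≤ M)
    (hdL : deriv fL 0 < 0) (hdR : 0 < deriv fR 0)
    (hε0 : 0 < ε) (hε : ε < min (-(deriv fL 0)) (deriv fR 0) / (3 * M))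
    (l3 l2 l1 m r1 r2 r3 : ℝ)
    (h1 : l3 < l2) (h2 : l2 < l1) (h3 : l1 < m) (h4 : m < r1) (h5 : r1 < r2) (h6 : r2 < r3)
    (hmem : l3 ∈ Set.Ioo (-ε) ε ∧ l2 ∈ Set.Ioo (-ε) ε ∧ l1 ∈ Set.Ioo (-ε) ε ∧
            m ∈ Set.Ioo (-ε) ε ∧ r1 ∈ Set.Ioo (-ε) ε ∧ r2 ∈ Set.Ioo (-ε) ε ∧
            r3 ∈ Set.Ioo (-ε) ε)
    (hmonoL : fL l2 ≥ fL l1) (hmonoR : fR r2 ≥ fR r1)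
    (α : ℝ) (hα : 0 < α) (h : ℝ) (hh : h = max (r3 - l1) (r1 - l3)) :
    StrictAntiOn (qL fL l1 l2 l3 α h) (Set.Icc l1 r1) ∧
    StrictMonoOn (qR fR r1 r2 r3 α h) (Set.Icc l1 r1) := by
  obtain ⟨hl3, hl2, hl1, hm, hr1, hr2, hr3⟩ := hmem
  have h3M : 0 < 3 * M := by linarith
  have hεM : 3 * M * ε < min (-(deriv fL 0)) (deriv fR 0) := by
    calc 3 * M * ε = ε * (3 * M) := by ring
      _ < _ := (lt_div_iff₀ h3M).mp hε
  have hεL : 3 * M * ε < -(deriv fL 0) := lt_of_lt_of_le hεM (min_le_left _ _)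
  have hεR : 3 * M * ε < deriv fR 0 := lt_of_lt_of_le hεM (min_le_right _ _)
  have hh0 : 0 < h := by
    rw [hh]
    exact lt_of_lt_of_le (by linarith : (0:ℝ) < r3 - l1) (le_max_left _ _)
  -- dd2 bounds
  obtain ⟨ξL, hξL, hξLe⟩ := dd2_eq fL hfL l1 l2 h2
  obtain ⟨ξR, hξR, hξRe⟩ := dd2_eq fR hfR r2 r1 h5
  have hξLicc : ξL ∈ Set.Icc (-ε) ε := by
    constructor <;> [linarith [hξL.1, hl2.1]; linarith [hξL.2, hl1.2]]
  have hξRicc : ξR ∈ Set.Icc (-ε) ε := by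
    constructor <;> [linarith [hξR.1, hr1.1]; linarith [hξR.2, hr2.2]]
  have hdd2L : dd2 fL l1 l2 ≤ deriv fL 0 + M * ε := by
    have := abs_le.mp (deriv_close fL M ε hfL hε0 hboundL ξL hξLicc)
    rw [hξLe]; linarith [this.2]
  have hdd2R : deriv fR 0 - M * ε ≤ dd2 fR r2 r1 := by
    have := abs_le.mp (deriv_close fR M ε hfR hε0 hboundR ξR hξRicc)
    rw [hξRe]; linarith [this.1]
  have n12 : r1 - r2 ≠ 0 := sub_ne_zero.mpr (by linarith)
  have n13 : r1 - r3 ≠ 0 := sub_ne_zero.mpr (by linarith)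
  have n23 : r2 - r3 ≠ 0 := sub_ne_zero.mpr (by linarith)
  have n21 : r2 - r1 ≠ 0 := sub_ne_zero.mpr (by linarith)
  have n31 : r3 - r1 ≠ 0 := sub_ne_zero.mpr (by linarith)
  have n32 : r3 - r2 ≠ 0 := sub_ne_zero.mpr (by linarith)
  have hdd2R' : dd2 fR r1 r2 = dd2 fR r2 r1 := by
    simp only [dd2]
    rw [div_eq_div_iff n12 n21]
    ring
  -- dd3 bounds
  obtain ⟨ηL, hηL, hηLe⟩ := dd3_eq_s4 fL hfL l1 l2 l3 h1 h2
  obtain ⟨ηR, hηR, hηRe⟩ := dd3_eq_s4 fR hfR r3 r2 r1 h5 h6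
  have hdd3L : |dd3 fL l1 l2 l3| ≤ M / 2 := by
    rw [hηLe, abs_div]
    have : |deriv (deriv fL) ηL| ≤ M := hboundL ηL
      ⟨by linarith [hηL.1, hl3.1], by linarith [hηL.2, hl1.2]⟩
    rw [abs_two]
    linarith
  have hdd3R : |dd3 fR r3 r2 r1| ≤ M / 2 := by
    rw [hηRe, abs_div]
    have : |deriv (deriv fR) ηR| ≤ M := hboundR ηR
      ⟨by linarith [hηR.1, hr1.1], by linarith [hηR.2, hr3.2]⟩
    rw [abs_two]
    linarith
  have hdd3R' : dd3 fR r1 r2 r3 = dd3 fR r3 r2 r1 := by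
    simp only [dd3, dd2]
    field_simp
    ring
  constructor
  · -- qL strictly decreasing
    have hderiv : ∀ x, HasDerivAt (qL fL l1 l2 l3 α h)
        (dd2 fL l1 l2 + (dd3 fL l1 l2 l3 - α * h) * ((x - l2) + (x - l1))) x := by
      intro x
      exact quad_hasDeriv (fL l1) (dd2 fL l1 l2) (dd3 fL l1 l2 l3 - α * h) l1 l2 x
    apply strictAntiOn_of_deriv_neg (convex_Icc _ _)
    · exact (HasDerivAt.continuousOn (fun x _ => hderiv x))
    · intro x hx
      rw [interior_Icc] at hx
      rw [(hderiv x).deriv]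
      set u : ℝ := (x - l2) + (x - l1) with hu
      have hu0 : 0 < u := by rw [hu]; linarith [hx.1]
      have hu4 : u < 4 * ε := by rw [hu]; linarith [hx.2, hl1.1, hl2.1, hr1.2]
      have habs := abs_le.mp hdd3L
      have p1 : dd3 fL l1 l2 l3 * u ≤ (M/2) * u :=
        mul_le_mul_of_nonneg_right habs.2 hu0.le
      have p2 : (M/2) * u ≤ 2 * (M * ε) := by nlinarith [hM.le, hu4, hu0]
      have p3 : 0 < α * h * u := by positivity
      have expand : (dd3 fL l1 l2 l3 - α * h) * u
          = dd3 fL l1 l2 l3 * u - α * h * u := by ring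
      rw [expand]
      nlinarith [p1, p2, p3, hdd2L, hεL]
  · -- qR strictly increasing
    have hderiv : ∀ x, HasDerivAt (qR fR r1 r2 r3 α h)
        (dd2 fR r1 r2 + (dd3 fR r1 r2 r3 - α * h) * ((x - r2) + (x - r1))) x := by
      intro x
      exact quad_hasDeriv (fR r1) (dd2 fR r1 r2) (dd3 fR r1 r2 r3 - α * h) r1 r2 x
    apply strictMonoOn_of_deriv_pos (convex_Icc _ _)
    · exact (HasDerivAt.continuousOn (fun x _ => hderiv x))
    · intro x hx
      rw [interior_Icc] at hx
      rw [(hderiv x).deriv]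
      set v : ℝ := (x - r2) + (x - r1) with hv
      have hv0 : v < 0 := by rw [hv]; linarith [hx.2]
      have hv4 : -(4 * ε) < v := by rw [hv]; linarith [hx.1, hl1.1, hr1.2, hr2.2]
      have hdd3 : |dd3 fR r1 r2 r3| ≤ M / 2 := by rw [hdd3R']; exact hdd3R
      have habs := abs_le.mp hdd3
      have p1 : (M/2) * v ≤ dd3 fR r1 r2 r3 * v := by
        nlinarith [mul_nonneg (sub_nonneg.mpr habs.2) (neg_nonneg.mpr hv0.le)]
      have p2 : -(2 * (M * ε)) ≤ (M/2) * v := by nlinarith [hM.le, hv4, hv0]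
      have p3 : 0 < -(α * h * v) := by
        have : 0 < α * h := mul_pos hα hh0
        nlinarith [this, hv0]
      have hdd2 : deriv fR 0 - M * ε ≤ dd2 fR r1 r2 := by rw [hdd2R']; exact hdd2R
      have expand : (dd3 fR r1 r2 r3 - α * h) * v
          = dd3 fR r1 r2 r3 * v - α * h * v := by ring
      rw [expand]
      nlinarith [p1, p2, p3, hdd2, hεR]
end

section
/- Let f : ℝ → ℝ, let l3 < l2 < l1 < m < r1 < r2 < r3 be reals, let h = max(r3 − l1, r1 − l3), and for each α > 0 let q^L_α and q^R_α be the model quadratics built from f (taking f_L = f_R = f). Set L* = (r1·r2 − l1·l2)/(r1 + r2 − l1 − l2). Then l1 < L* < r1, and for every δ > 0 there exists α₀ > 0 such that for all α ≥ α₀: (i) there exists x ∈ (l1, r1) with q^L_α(x) = q^R_α(x), and (ii) every x ∈ [l1, r1] with q^L_α(x) = q^R_α(x) satisfies |x − L*| < δ. -/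
theorem stmt7 (f : ℝ → ℝ) (l3 l2 l1 m r1 r2 r3 : ℝ)
    (h1 : l3 < l2) (h2 : l2 < l1) (h3 : l1 < m) (h4 : m < r1) (h5 : r1 < r2) (h6 : r2 < r3)
    (h : ℝ) (hh : h = max (r3 - l1) (r1 - l3))
    (Lstar : ℝ) (hL : Lstar = (r1 * r2 - l1 * l2) / (r1 + r2 - l1 - l2)) :
    (l1 < Lstar ∧ Lstar < r1) ∧
    ∀ δ > 0, ∃ α₀ > 0, ∀ α ≥ α₀,
      (∃ x ∈ Set.Ioo l1 r1, qL f l1 l2 l3 α h x = qR f r1 r2 r3 α h x) ∧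
      (∀ x ∈ Set.Icc l1 r1, qL f l1 l2 l3 α h x = qR f r1 r2 r3 α h x →
        |x - Lstar| < δ) := by
  have hS : (0:ℝ) < r1 + r2 - l1 - l2 := by linarith
  have hh0 : (0:ℝ) < h := by
    rw [hh]; exact lt_max_of_lt_left (by linarith)
  have hSL : (r1 + r2 - l1 - l2) * Lstar = r1 * r2 - l1 * l2 := by
    rw [hL]; field_simp
  have hl1L : l1 < Lstar := by
    rw [hL, lt_div_iff₀ hS]
    nlinarith [mul_pos (show (0:ℝ) < r1 - l1 by linarith) (show (0:ℝ) < r2 - l1 by linarith)]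
  have hLr1 : Lstar < r1 := by
    rw [hL, div_lt_iff₀ hS]
    nlinarith [mul_pos (show (0:ℝ) < r1 - l1 by linarith) (show (0:ℝ) < r1 - l2 by linarith)]
  obtain ⟨D, hDdef, hcontD⟩ : ∃ D : ℝ → ℝ,
      (∀ x, D x = qL f l1 l2 l3 0 h x - qR f r1 r2 r3 0 h x) ∧ Continuous D :=
    ⟨_, fun _ => rfl, by unfold qL qR; fun_prop⟩
  have key : ∀ α x : ℝ, qL f l1 l2 l3 α h x - qR f r1 r2 r3 α h x
      = D x + α * h * ((r1 + r2 - l1 - l2) * (Lstar - x)) := by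
    intro α x
    rw [hDdef]
    simp only [qL, qR]
    linear_combination (-(α * h)) * hSL
  obtain ⟨M, hM⟩ := isCompact_Icc.exists_bound_of_continuousOn
    (s := Set.Icc l1 r1) hcontD.continuousOn
  have hM' : ∀ x ∈ Set.Icc l1 r1, |D x| ≤ M := by
    intro x hx; simpa [Real.norm_eq_abs] using hM x hx
  have hM0 : 0 ≤ M := le_trans (abs_nonneg _) (hM' l1 ⟨le_refl _, by linarith⟩)
  refine ⟨⟨hl1L, hLr1⟩, ?_⟩
  intro δ hδ
  set e : ℝ := min δ (min (Lstar - l1) (r1 - Lstar)) with he_def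
  have he : 0 < e := lt_min hδ (lt_min (by linarith) (by linarith))
  have heδ : e ≤ δ := min_le_left _ _
  have heL : e ≤ Lstar - l1 := le_trans (min_le_right _ _) (min_le_left _ _)
  have heR : e ≤ r1 - Lstar := le_trans (min_le_right _ _) (min_le_right _ _)
  have hden : 0 < h * (r1 + r2 - l1 - l2) * e := mul_pos (mul_pos hh0 hS) he
  refine ⟨(M + 1) / (h * (r1 + r2 - l1 - l2) * e), div_pos (by linarith) hden, ?_⟩
  intro α hα
  have hα0 : 0 < α := lt_of_lt_of_le (div_pos (by linarith) hden) hα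
  have hbig : M + 1 ≤ α * (h * (r1 + r2 - l1 - l2) * e) := (div_le_iff₀ hden).mp hα
  have hαhs : 0 < α * h * (r1 + r2 - l1 - l2) := mul_pos (mul_pos hα0 hh0) hS
  constructor
  · -- existence via IVT
    have hcontg : ContinuousOn
        (fun x => qL f l1 l2 l3 α h x - qR f r1 r2 r3 α h x) (Set.Icc l1 r1) := by
      unfold qL qR; fun_prop
    have hgl1 : 0 < qL f l1 l2 l3 α h l1 - qR f r1 r2 r3 α h l1 := by
      have hb := hM' l1 ⟨le_refl _, by linarith⟩
      have hDl1 := neg_abs_le (D l1)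
      have hmul : 0 ≤ α * h * (r1 + r2 - l1 - l2) * (Lstar - l1 - e) :=
        mul_nonneg hαhs.le (by linarith)
      rw [key]
      nlinarith [hbig]
    have hgr1 : qL f l1 l2 l3 α h r1 - qR f r1 r2 r3 α h r1 < 0 := by
      have hb := hM' r1 ⟨by linarith, le_refl _⟩
      have hDr1 := le_abs_self (D r1)
      have hmul : 0 ≤ α * h * (r1 + r2 - l1 - l2) * (r1 - Lstar - e) :=
        mul_nonneg hαhs.le (by linarith)
      rw [key]
      nlinarith [hbig]
    obtain ⟨x, hx, hgx⟩ := intermediate_value_Ioo' (by linarith : l1 ≤ r1) hcontg ⟨hgr1, hgl1⟩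
    exact ⟨x, hx, sub_eq_zero.mp hgx⟩
  · intro x hx hqx
    have hzero : qL f l1 l2 l3 α h x - qR f r1 r2 r3 α h x = 0 := sub_eq_zero.mpr hqx
    rw [key] at hzero
    have hDx : D x = α * h * (r1 + r2 - l1 - l2) * (x - Lstar) := by linear_combination hzero
    have habs : α * h * (r1 + r2 - l1 - l2) * |x - Lstar| ≤ M := by
      have heq : α * h * (r1 + r2 - l1 - l2) * |x - Lstar| = |D x| := by
        rw [hDx, abs_mul, abs_of_pos hαhs]
      rw [heq]; exact hM' x hx
    by_contra hcon
    push_neg at hcon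
    have h1' : α * h * (r1 + r2 - l1 - l2) * δ ≤ M :=
      le_trans (mul_le_mul_of_nonneg_left hcon hαhs.le) habs
    have h2' : α * (h * (r1 + r2 - l1 - l2) * e) ≤ α * (h * (r1 + r2 - l1 - l2) * δ) :=
      mul_le_mul_of_nonneg_left
        (mul_le_mul_of_nonneg_left heδ (mul_pos hh0 hS).le) hα0.le
    have h3' : α * (h * (r1 + r2 - l1 - l2) * δ) = α * h * (r1 + r2 - l1 - l2) * δ := by ring
    linarith
end

section
/- For every ordered 5-tuple x = (l2, l1, m, r1, r2) ∈ ℝ^5 with t = g(x), it holds that g(Ũ1(x)) < t and g(Ũ2(x)) > t. Consequently, in a run of the EUPM, an iteration of type 1 is always followed by an iteration of type 1 or 4, and an iteration of type 2 is always followed by an iteration of type 2 or 3. -/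
/-- 5-tuples `(l2, l1, m, r1, r2)` of reals. -/
abbrev R5 := ℝ × ℝ × ℝ × ℝ × ℝ

/-- `x = (l2, l1, m, r1, r2)` is ordered if `l2 < l1 < m < r1 < r2`. -/
def Ordered5 (x : R5) : Prop :=
  x.1 < x.2.1 ∧ x.2.1 < x.2.2.1 ∧ x.2.2.1 < x.2.2.2.1 ∧ x.2.2.2.1 < x.2.2.2.2

/-- The EUPM step `g(l2,l1,m,r1,r2) = (r1·r2 − l1·l2)/(r1 + r2 − l1 − l2)`. -/
noncomputable def g (x : R5) : ℝ :=
  (x.2.2.2.1 * x.2.2.2.2 - x.2.1 * x.1) / (x.2.2.2.1 + x.2.2.2.2 - x.2.1 - x.1)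

/-- Inner diameter `b(x) = r1 − l1`. -/
def b (x : R5) : ℝ := x.2.2.2.1 - x.2.1

/-- The middle component `m`. -/
def mid (x : R5) : ℝ := x.2.2.1

/-- `Ũ1(x) = (l2, l1, t, m, r1)` where `t = g(x)`. -/
noncomputable def U1 (x : R5) : R5 := (x.1, x.2.1, g x, x.2.2.1, x.2.2.2.1)

/-- `Ũ2(x) = (l1, m, t, r1, r2)` where `t = g(x)`. -/
noncomputable def U2 (x : R5) : R5 := (x.2.1, x.2.2.1, g x, x.2.2.2.1, x.2.2.2.2)

/-- `Ũ3(x) = (l2, l1, m, t, r1)` where `t = g(x)`. -/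
noncomputable def U3 (x : R5) : R5 := (x.1, x.2.1, x.2.2.1, g x, x.2.2.2.1)

/-- `Ũ4(x) = (l1, t, m, r1, r2)` where `t = g(x)`. -/
noncomputable def U4 (x : R5) : R5 := (x.2.1, g x, x.2.2.1, x.2.2.2.1, x.2.2.2.2)

/-- `X(l2, l1, m, r1, r2) = (−r2, −r1, −m, −l1, −l2)`. -/
def Xmap (x : R5) : R5 := (-x.2.2.2.2, -x.2.2.2.1, -x.2.2.1, -x.2.1, -x.1)

/-- The EUPM one-step update for an objective `f`. -/
noncomputable def Step (f : ℝ → ℝ) (x : R5) : R5 :=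
  if g x < mid x then
    (if f (g x) < f (mid x) then U1 x else U4 x)
  else
    (if f (g x) < f (mid x) then U2 x else U3 x)

/-- `x` is an extended 5-bracket for `f`: ordered with `f l1 ≥ f m ≤ f r1`. -/
def ExtBracket5 (f : ℝ → ℝ) (x : R5) : Prop :=
  Ordered5 x ∧ f x.2.1 ≥ f (mid x) ∧ f (mid x) ≤ f x.2.2.2.1

theorem stmt8 (x : R5) (hx : Ordered5 x) :
    (g (U1 x) < g x ∧ g x < g (U2 x)) ∧
    (g (U1 x) < mid (U1 x) ∧ mid (U2 x) < g (U2 x)) := by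
  obtain ⟨a, b, c, d, e⟩ := x
  obtain ⟨h1, h2, h3, h4⟩ := hx
  simp only [g, U1, U2, mid] at *
  have hD : (0:ℝ) < d + e - b - a := by linarith
  have hD1 : (0:ℝ) < c + d - b - a := by linarith
  have hD2 : (0:ℝ) < d + e - c - b := by linarith
  have key1 : (c * d - b * a) / (c + d - b - a) < (d * e - b * a) / (d + e - b - a) := by
    rw [div_lt_div_iff₀ hD1 hD]
    nlinarith [mul_pos (mul_pos (sub_pos.2 (h3.trans h4)) (sub_pos.2 (h1.trans (h2.trans h3)))) (sub_pos.2 (h2.trans h3))]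
  have key2 : (d * e - b * a) / (d + e - b - a) < (d * e - c * b) / (d + e - c - b) := by
    rw [div_lt_div_iff₀ hD hD2]
    nlinarith [mul_pos (mul_pos (sub_pos.2 (h1.trans h2)) (sub_pos.2 (h2.trans h3))) (sub_pos.2 ((h2.trans h3).trans h4))]
  exact ⟨⟨key1, key2⟩, key1, key2⟩
end

section
/- Define W : {1,2,3,4} → {1,2,3,4} by W(1) = 2, W(2) = 1, W(3) = 4, W(4) = 3, and for a list I = [i_1, …, i_n] with entries in {1,2,3,4} let U_I = Ũ_{i_n} ∘ … ∘ Ũ_{i_1} and W(I) = [W(i_1), …, W(i_n)]. Then for every such list I and every x ∈ ℝ^5 (with real division under the convention y/0 = 0), U_I(x) = X(U_{W(I)}(X(x))). -/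
/-- The update map with index `i ∈ {1,2,3,4}`. -/
noncomputable def Ut : ℕ → R5 → R5
  | 1 => U1
  | 2 => U2
  | 3 => U3
  | 4 => U4
  | _ => id

/-- `W` swaps `1 ↔ 2` and `3 ↔ 4`. -/
def W : ℕ → ℕ
  | 1 => 2
  | 2 => 1
  | 3 => 4
  | 4 => 3
  | n => n

/-- `U_I = Ũ_{i_n} ∘ … ∘ Ũ_{i_1}` applied to `x`. -/
noncomputable def applySeq (I : List ℕ) (x : R5) : R5 :=
  I.foldl (fun y i => Ut i y) x

lemma g_Xmap (x : R5) : g (Xmap x) = - g x := by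
  obtain ⟨a, b, c, d, e⟩ := x
  simp only [g, Xmap]
  rw [show -b * -a - -d * -e = -(d * e - b * a) by ring,
    show -b + -a - -d - -e = (d + e - b - a) by ring, neg_div]

lemma Xmap_Xmap (x : R5) : Xmap (Xmap x) = x := by
  obtain ⟨a, b, c, d, e⟩ := x
  simp [Xmap]

lemma Ut_conj (i : ℕ) (hi : i = 1 ∨ i = 2 ∨ i = 3 ∨ i = 4) (x : R5) :
    Ut i x = Xmap (Ut (W i) (Xmap x)) := by
  obtain ⟨a, b, c, d, e⟩ := x
  rcases hi with h | h | h | h <;> subst h <;>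
    simp only [Ut, W, U1, U2, U3, U4, Xmap] <;>
    rw [show ((-e, -d, -c, -b, -a) : R5) = Xmap (a, b, c, d, e) from rfl, g_Xmap] <;>
    simp

theorem stmt11 (I : List ℕ) (hI : ∀ i ∈ I, i = 1 ∨ i = 2 ∨ i = 3 ∨ i = 4) (x : R5) :
    applySeq I x = Xmap (applySeq (I.map W) (Xmap x)) := by
  induction I generalizing x with
  | nil => simp [applySeq, Xmap_Xmap]
  | cons i I ih =>
    have hi := hI i List.mem_cons_self
    have hI' : ∀ j ∈ I, j = 1 ∨ j = 2 ∨ j = 3 ∨ j = 4 :=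
      fun j hj => hI j (List.mem_cons_of_mem _ hj)
    simp only [applySeq, List.map_cons, List.foldl_cons]
    rw [show (I.foldl (fun y i => Ut i y) (Ut i x)) = applySeq I (Ut i x) from rfl,
      ih hI', Ut_conj i hi x, Xmap_Xmap]
    rfl
end

section
/- Let f, g̃ : ℝ → ℝ satisfy g̃(y) = f(−y) for all y ∈ ℝ. Let x = (l2, l1, m, r1, r2) ∈ ℝ^5 be ordered, and suppose t := g(x) satisfies t ≠ m and f(t) ≠ f(m). Then Step_{g̃}(X(x)) = X(Step_f(x)). -/
theorem stmt12 (f gtil : ℝ → ℝ) (hg : ∀ y : ℝ, gtil y = f (-y))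
    (x : R5) (hx : Ordered5 x)
    (htm : g x ≠ mid x) (hfm : f (g x) ≠ f (mid x)) :
    Step gtil (Xmap x) = Xmap (Step f x) := by
  obtain ⟨l2, l1, m, r1, r2⟩ := x
  have hG : g (-r2, -r1, -m, -l1, -l2) = -g (l2, l1, m, r1, r2) := by
    simp only [g]
    rw [show ((-l1) * (-l2) - (-r1) * (-r2) : ℝ) = -(r1 * r2 - l1 * l2) by ring,
      show ((-l1) + (-l2) - (-r1) - (-r2) : ℝ) = r1 + r2 - l1 - l2 by ring, neg_div]
  rw [show mid (l2, l1, m, r1, r2) = m from rfl] at htm hfm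
  rcases lt_or_gt_of_ne htm with h1 | h1 <;>
    rcases lt_or_gt_of_ne hfm with h2 | h2 <;>
      simp [Step, Xmap, mid, U1, U2, U3, U4, hG, hg, neg_neg, neg_lt_neg_iff,
        h1, h2, h1.not_gt, h2.not_gt, not_lt_of_gt h1, not_lt_of_gt h2]
end

section
/- Let f : ℝ → ℝ and let x₀ ∈ ℝ^5 be an extended 5-bracket for f. Define x_{i+1} = Step_f(x_i) for i = 0, 1, 2, 3, 4, and let t_i = g(x_i) and m_i denote the middle component of x_i. If for each i = 0, …, 4 we have t_i ≠ m_i and f(t_i) ≠ f(m_i), then b(x₅) ≤ b(x₀)/2. In other words, every five iterations of the Extremal Underestimating Polynomial Method reduce the inner bracket length by at least a factor of 2, so the method converges R-linearly. -/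
-- low-level g lemmas
lemma g_gt (l2 l1 m r1 r2 : ℝ) (h1 : l2 < l1) (h2 : l1 < m) (h3 : m < r1) (h4 : r1 < r2) :
    l1 < g (l2, l1, m, r1, r2) := by
  have hD : (0:ℝ) < r1 + r2 - l1 - l2 := by linarith
  have key : g (l2, l1, m, r1, r2) - l1 = ((r1 - l1) * (r2 - l1)) / (r1 + r2 - l1 - l2) := by
    simp only [g]
    field_simp
    ring
  have hpos : (0:ℝ) < ((r1 - l1) * (r2 - l1)) / (r1 + r2 - l1 - l2) :=
    div_pos (by nlinarith) hD
  linarith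

lemma g_lt (l2 l1 m r1 r2 : ℝ) (h1 : l2 < l1) (h2 : l1 < m) (h3 : m < r1) (h4 : r1 < r2) :
    g (l2, l1, m, r1, r2) < r1 := by
  have hD : (0:ℝ) < r1 + r2 - l1 - l2 := by linarith
  have key : r1 - g (l2, l1, m, r1, r2) = ((r1 - l1) * (r1 - l2)) / (r1 + r2 - l1 - l2) := by
    simp only [g]
    field_simp
    ring
  have hpos : (0:ℝ) < ((r1 - l1) * (r1 - l2)) / (r1 + r2 - l1 - l2) :=
    div_pos (by nlinarith) hD
  linarith

lemma g_half_left (l2 l1 m r1 r2 : ℝ) (h1 : l2 < l1) (h2 : l1 < m) (h3 : m < r1) (h4 : r1 < r2) :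
    g (l2, l1, m, r1, r2) - l1 ≤ (r2 - l1) / 2 := by
  have hD : (0:ℝ) < r1 + r2 - l1 - l2 := by linarith
  have key : g (l2, l1, m, r1, r2) - l1 = ((r1 - l1) * (r2 - l1)) / (r1 + r2 - l1 - l2) := by
    simp only [g]
    field_simp
    ring
  have h5 : ((r1 - l1) * (r2 - l1)) / (r1 + r2 - l1 - l2) ≤ (r2 - l1) / 2 := by
    rw [div_le_div_iff₀ hD (by norm_num : (0:ℝ) < 2)]
    nlinarith [mul_pos (show (0:ℝ) < r2 - l1 by linarith)
      (show (0:ℝ) < (r2 - r1) + (l1 - l2) by linarith)]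
  linarith

lemma g_half_right (l2 l1 m r1 r2 : ℝ) (h1 : l2 < l1) (h2 : l1 < m) (h3 : m < r1) (h4 : r1 < r2) :
    r1 - g (l2, l1, m, r1, r2) ≤ (r1 - l2) / 2 := by
  have hD : (0:ℝ) < r1 + r2 - l1 - l2 := by linarith
  have key : r1 - g (l2, l1, m, r1, r2) = ((r1 - l1) * (r1 - l2)) / (r1 + r2 - l1 - l2) := by
    simp only [g]
    field_simp
    ring
  have h5 : ((r1 - l1) * (r1 - l2)) / (r1 + r2 - l1 - l2) ≤ (r1 - l2) / 2 := by
    rw [div_le_div_iff₀ hD (by norm_num : (0:ℝ) < 2)]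
    nlinarith [mul_pos (show (0:ℝ) < r1 - l2 by linarith)
      (show (0:ℝ) < (r2 - r1) + (l1 - l2) by linarith)]
  linarith

lemma force1 (l2 l1 m r1 r2 c : ℝ) (h1 : l2 < l1) (h2 : l1 < m) (h3 : m < r1) (h4 : r1 < r2) :
    g (l2, l1, c, m, r1) < g (l2, l1, m, r1, r2) := by
  have hD : (0:ℝ) < r1 + r2 - l1 - l2 := by linarith
  have hD' : (0:ℝ) < m + r1 - l1 - l2 := by linarith
  simp only [g]
  rw [div_lt_div_iff₀ hD' hD]
  nlinarith [mul_pos (mul_pos (show (0:ℝ) < r1 - l1 by linarith)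
    (show (0:ℝ) < r1 - l2 by linarith)) (show (0:ℝ) < r2 - m by linarith)]

lemma force2 (l2 l1 m r1 r2 c : ℝ) (h1 : l2 < l1) (h2 : l1 < m) (h3 : m < r1) (h4 : r1 < r2) :
    g (l2, l1, m, r1, r2) < g (l1, m, c, r1, r2) := by
  have hD : (0:ℝ) < r1 + r2 - l1 - l2 := by linarith
  have hD' : (0:ℝ) < r1 + r2 - m - l1 := by linarith
  simp only [g]
  rw [div_lt_div_iff₀ hD hD']
  nlinarith [mul_pos (mul_pos (show (0:ℝ) < r1 - l1 by linarith)
    (show (0:ℝ) < r2 - l1 by linarith)) (show (0:ℝ) < m - l2 by linarith)]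

-- step equations
lemma stepU1 (f : ℝ → ℝ) (l2 l1 m r1 r2 : ℝ) (htm : g (l2, l1, m, r1, r2) < m)
    (hf : f (g (l2, l1, m, r1, r2)) < f m) :
    Step f (l2, l1, m, r1, r2) = U1 (l2, l1, m, r1, r2) := by
  have hm : mid (l2, l1, m, r1, r2) = m := rfl
  unfold Step
  rw [hm, if_pos htm, if_pos hf]

lemma stepU4 (f : ℝ → ℝ) (l2 l1 m r1 r2 : ℝ) (htm : g (l2, l1, m, r1, r2) < m)
    (hf : f m < f (g (l2, l1, m, r1, r2))) :
    Step f (l2, l1, m, r1, r2) = U4 (l2, l1, m, r1, r2) := by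
  have hm : mid (l2, l1, m, r1, r2) = m := rfl
  unfold Step
  rw [hm, if_pos htm, if_neg (not_lt.mpr hf.le)]

lemma stepU2 (f : ℝ → ℝ) (l2 l1 m r1 r2 : ℝ) (hmt : m < g (l2, l1, m, r1, r2))
    (hf : f (g (l2, l1, m, r1, r2)) < f m) :
    Step f (l2, l1, m, r1, r2) = U2 (l2, l1, m, r1, r2) := by
  have hm : mid (l2, l1, m, r1, r2) = m := rfl
  unfold Step
  rw [hm, if_neg (not_lt.mpr hmt.le), if_pos hf]

lemma stepU3 (f : ℝ → ℝ) (l2 l1 m r1 r2 : ℝ) (hmt : m < g (l2, l1, m, r1, r2))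
    (hf : f m < f (g (l2, l1, m, r1, r2))) :
    Step f (l2, l1, m, r1, r2) = U3 (l2, l1, m, r1, r2) := by
  have hm : mid (l2, l1, m, r1, r2) = m := rfl
  unfold Step
  rw [hm, if_neg (not_lt.mpr hmt.le), if_neg (not_lt.mpr hf.le)]

-- generic step lemmas
lemma ordStep (f : ℝ → ℝ) (y : R5) (h : Ordered5 y) (hg : g y ≠ mid y)
    (hf : f (g y) ≠ f (mid y)) : Ordered5 (Step f y) := by
  obtain ⟨l2, l1, m, r1, r2⟩ := y
  obtain ⟨h1, h2, h3, h4⟩ := h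
  have hm : mid (l2, l1, m, r1, r2) = m := rfl
  rw [hm] at hg hf
  have hgt := g_gt l2 l1 m r1 r2 h1 h2 h3 h4
  have hlt := g_lt l2 l1 m r1 r2 h1 h2 h3 h4
  rcases lt_or_gt_of_ne hg with htm | hmt
  · rcases lt_or_gt_of_ne hf with hf' | hf'
    · rw [stepU1 f l2 l1 m r1 r2 htm hf']
      exact ⟨h1, hgt, htm, h3⟩
    · rw [stepU4 f l2 l1 m r1 r2 htm hf']
      exact ⟨hgt, htm, h3, h4⟩
  · rcases lt_or_gt_of_ne hf with hf' | hf'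
    · rw [stepU2 f l2 l1 m r1 r2 hmt hf']
      exact ⟨h2, hmt, hlt, h4⟩
    · rw [stepU3 f l2 l1 m r1 r2 hmt hf']
      exact ⟨h1, h2, hmt, hlt⟩

lemma bStep_le (f : ℝ → ℝ) (y : R5) (h : Ordered5 y) (hg : g y ≠ mid y)
    (hf : f (g y) ≠ f (mid y)) : b (Step f y) ≤ b y := by
  obtain ⟨l2, l1, m, r1, r2⟩ := y
  obtain ⟨h1, h2, h3, h4⟩ := h
  have hm : mid (l2, l1, m, r1, r2) = m := rfl
  rw [hm] at hg hf
  have hgt := g_gt l2 l1 m r1 r2 h1 h2 h3 h4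
  have hlt := g_lt l2 l1 m r1 r2 h1 h2 h3 h4
  rcases lt_or_gt_of_ne hg with htm | hmt
  · rcases lt_or_gt_of_ne hf with hf' | hf'
    · rw [stepU1 f l2 l1 m r1 r2 htm hf']
      show m - l1 ≤ r1 - l1
      linarith
    · rw [stepU4 f l2 l1 m r1 r2 htm hf']
      show r1 - g (l2, l1, m, r1, r2) ≤ r1 - l1
      linarith
  · rcases lt_or_gt_of_ne hf with hf' | hf'
    · rw [stepU2 f l2 l1 m r1 r2 hmt hf']
      show r1 - m ≤ r1 - l1
      linarith
    · rw [stepU3 f l2 l1 m r1 r2 hmt hf']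
      show g (l2, l1, m, r1, r2) - l1 ≤ r1 - l1
      linarith

-- chain lemmas: automaton states
-- E: flags (P, M2), forced mid < g : dies in 1 step
lemma chainE (f : ℝ → ℝ) (B l2 l1 m r1 r2 : ℝ)
    (h1 : l2 < l1) (h2 : l1 < m) (h3 : m < r1) (h4 : r1 < r2)
    (hfa : f (g (l2, l1, m, r1, r2)) ≠ f m)
    (hmt : m < g (l2, l1, m, r1, r2))
    (hP : r2 - l1 ≤ B) (hM2 : r1 - m ≤ B / 2) :
    b (Step f (l2, l1, m, r1, r2)) ≤ B / 2 := by
  rcases lt_or_gt_of_ne hfa with hf | hf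
  · rw [stepU2 f l2 l1 m r1 r2 hmt hf]
    show r1 - m ≤ B / 2
    exact hM2
  · rw [stepU3 f l2 l1 m r1 r2 hmt hf]
    show g (l2, l1, m, r1, r2) - l1 ≤ B / 2
    have := g_half_left l2 l1 m r1 r2 h1 h2 h3 h4
    linarith

-- D1: flags (Q, M1), forced g < mid : dies in 1 step
lemma chainD1 (f : ℝ → ℝ) (B l2 l1 m r1 r2 : ℝ)
    (h1 : l2 < l1) (h2 : l1 < m) (h3 : m < r1) (h4 : r1 < r2)
    (hfa : f (g (l2, l1, m, r1, r2)) ≠ f m)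
    (htm : g (l2, l1, m, r1, r2) < m)
    (hQ : r1 - l2 ≤ B) (hM1 : m - l1 ≤ B / 2) :
    b (Step f (l2, l1, m, r1, r2)) ≤ B / 2 := by
  rcases lt_or_gt_of_ne hfa with hf | hf
  · rw [stepU1 f l2 l1 m r1 r2 htm hf]
    show m - l1 ≤ B / 2
    exact hM1
  · rw [stepU4 f l2 l1 m r1 r2 htm hf]
    show r1 - g (l2, l1, m, r1, r2) ≤ B / 2
    have := g_half_right l2 l1 m r1 r2 h1 h2 h3 h4
    linarith

-- D4: flags (P, Q, M1), no forcing : dies in ≤ 2 steps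
lemma chainD4 (f : ℝ → ℝ) (B l2 l1 m r1 r2 : ℝ)
    (h1 : l2 < l1) (h2 : l1 < m) (h3 : m < r1) (h4 : r1 < r2)
    (hga : g (l2, l1, m, r1, r2) ≠ m) (hfa : f (g (l2, l1, m, r1, r2)) ≠ f m)
    (hgb : g (Step f (l2, l1, m, r1, r2)) ≠ mid (Step f (l2, l1, m, r1, r2)))
    (hfb : f (g (Step f (l2, l1, m, r1, r2))) ≠ f (mid (Step f (l2, l1, m, r1, r2))))
    (hP : r2 - l1 ≤ B) (hQ : r1 - l2 ≤ B) (hM1 : m - l1 ≤ B / 2) :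
    b (Step f (Step f (l2, l1, m, r1, r2))) ≤ B / 2 := by
  have hgt := g_gt l2 l1 m r1 r2 h1 h2 h3 h4
  have hlt := g_lt l2 l1 m r1 r2 h1 h2 h3 h4
  rcases lt_or_gt_of_ne hga with htm | hmt
  · rcases lt_or_gt_of_ne hfa with hf | hf
    · -- T1 : dies via M1
      rw [stepU1 f l2 l1 m r1 r2 htm hf] at hgb hfb ⊢
      have hordz : Ordered5 (U1 (l2, l1, m, r1, r2)) := ⟨h1, hgt, htm, h3⟩
      have hmono := bStep_le f (U1 (l2, l1, m, r1, r2)) hordz hgb hfb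
      have hb : b (U1 (l2, l1, m, r1, r2)) = m - l1 := rfl
      linarith
    · -- T4 : dies via Q
      rw [stepU4 f l2 l1 m r1 r2 htm hf] at hgb hfb ⊢
      have hordz : Ordered5 (U4 (l2, l1, m, r1, r2)) := ⟨hgt, htm, h3, h4⟩
      have hmono := bStep_le f (U4 (l2, l1, m, r1, r2)) hordz hgb hfb
      have hb : b (U4 (l2, l1, m, r1, r2)) = r1 - g (l2, l1, m, r1, r2) := rfl
      have := g_half_right l2 l1 m r1 r2 h1 h2 h3 h4
      linarith
  · rcases lt_or_gt_of_ne hfa with hf | hf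
    · -- T2 : alive, go to E
      rw [stepU2 f l2 l1 m r1 r2 hmt hf] at hgb hfb ⊢
      exact chainE f B l1 m (g (l2, l1, m, r1, r2)) r1 r2 h2 hmt hlt h4 hfb
        (force2 l2 l1 m r1 r2 (g (l2, l1, m, r1, r2)) h1 h2 h3 h4)
        (by linarith)
        (by have := g_half_right l2 l1 m r1 r2 h1 h2 h3 h4; linarith)
    · -- T3 : dies via P
      rw [stepU3 f l2 l1 m r1 r2 hmt hf] at hgb hfb ⊢
      have hordz : Ordered5 (U3 (l2, l1, m, r1, r2)) := ⟨h1, h2, hmt, hlt⟩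
      have hmono := bStep_le f (U3 (l2, l1, m, r1, r2)) hordz hgb hfb
      have hb : b (U3 (l2, l1, m, r1, r2)) = g (l2, l1, m, r1, r2) - l1 := rfl
      have := g_half_left l2 l1 m r1 r2 h1 h2 h3 h4
      linarith

-- D3': flags (P, Q, M2), no forcing : dies in ≤ 2 steps
lemma chainD3' (f : ℝ → ℝ) (B l2 l1 m r1 r2 : ℝ)
    (h1 : l2 < l1) (h2 : l1 < m) (h3 : m < r1) (h4 : r1 < r2)
    (hga : g (l2, l1, m, r1, r2) ≠ m) (hfa : f (g (l2, l1, m, r1, r2)) ≠ f m)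
    (hgb : g (Step f (l2, l1, m, r1, r2)) ≠ mid (Step f (l2, l1, m, r1, r2)))
    (hfb : f (g (Step f (l2, l1, m, r1, r2))) ≠ f (mid (Step f (l2, l1, m, r1, r2))))
    (hP : r2 - l1 ≤ B) (hQ : r1 - l2 ≤ B) (hM2 : r1 - m ≤ B / 2) :
    b (Step f (Step f (l2, l1, m, r1, r2))) ≤ B / 2 := by
  have hgt := g_gt l2 l1 m r1 r2 h1 h2 h3 h4
  have hlt := g_lt l2 l1 m r1 r2 h1 h2 h3 h4
  rcases lt_or_gt_of_ne hga with htm | hmt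
  · rcases lt_or_gt_of_ne hfa with hf | hf
    · -- T1 : alive, go to D1
      rw [stepU1 f l2 l1 m r1 r2 htm hf] at hgb hfb ⊢
      exact chainD1 f B l2 l1 (g (l2, l1, m, r1, r2)) m r1 h1 hgt htm h3 hfb
        (force1 l2 l1 m r1 r2 (g (l2, l1, m, r1, r2)) h1 h2 h3 h4)
        (by linarith)
        (by have := g_half_left l2 l1 m r1 r2 h1 h2 h3 h4; linarith)
    · -- T4 : dies via Q
      rw [stepU4 f l2 l1 m r1 r2 htm hf] at hgb hfb ⊢
      have hordz : Ordered5 (U4 (l2, l1, m, r1, r2)) := ⟨hgt, htm, h3, h4⟩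
      have hmono := bStep_le f (U4 (l2, l1, m, r1, r2)) hordz hgb hfb
      have hb : b (U4 (l2, l1, m, r1, r2)) = r1 - g (l2, l1, m, r1, r2) := rfl
      have := g_half_right l2 l1 m r1 r2 h1 h2 h3 h4
      linarith
  · rcases lt_or_gt_of_ne hfa with hf | hf
    · -- T2 : dies via M2
      rw [stepU2 f l2 l1 m r1 r2 hmt hf] at hgb hfb ⊢
      have hordz : Ordered5 (U2 (l2, l1, m, r1, r2)) := ⟨h2, hmt, hlt, h4⟩
      have hmono := bStep_le f (U2 (l2, l1, m, r1, r2)) hordz hgb hfb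
      have hb : b (U2 (l2, l1, m, r1, r2)) = r1 - m := rfl
      linarith
    · -- T3 : dies via P
      rw [stepU3 f l2 l1 m r1 r2 hmt hf] at hgb hfb ⊢
      have hordz : Ordered5 (U3 (l2, l1, m, r1, r2)) := ⟨h1, h2, hmt, hlt⟩
      have hmono := bStep_le f (U3 (l2, l1, m, r1, r2)) hordz hgb hfb
      have hb : b (U3 (l2, l1, m, r1, r2)) = g (l2, l1, m, r1, r2) - l1 := rfl
      have := g_half_left l2 l1 m r1 r2 h1 h2 h3 h4
      linarith

-- C: flags (P, Q), no forcing : dies in ≤ 3 steps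
lemma chainC (f : ℝ → ℝ) (B l2 l1 m r1 r2 : ℝ)
    (h1 : l2 < l1) (h2 : l1 < m) (h3 : m < r1) (h4 : r1 < r2)
    (hga : g (l2, l1, m, r1, r2) ≠ m) (hfa : f (g (l2, l1, m, r1, r2)) ≠ f m)
    (hgb : g (Step f (l2, l1, m, r1, r2)) ≠ mid (Step f (l2, l1, m, r1, r2)))
    (hfb : f (g (Step f (l2, l1, m, r1, r2))) ≠ f (mid (Step f (l2, l1, m, r1, r2))))
    (hgc : g (Step f (Step f (l2, l1, m, r1, r2))) ≠ mid (Step f (Step f (l2, l1, m, r1, r2))))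
    (hfc : f (g (Step f (Step f (l2, l1, m, r1, r2)))) ≠
      f (mid (Step f (Step f (l2, l1, m, r1, r2)))))
    (hP : r2 - l1 ≤ B) (hQ : r1 - l2 ≤ B) :
    b (Step f (Step f (Step f (l2, l1, m, r1, r2)))) ≤ B / 2 := by
  have hgt := g_gt l2 l1 m r1 r2 h1 h2 h3 h4
  have hlt := g_lt l2 l1 m r1 r2 h1 h2 h3 h4
  rcases lt_or_gt_of_ne hga with htm | hmt
  · rcases lt_or_gt_of_ne hfa with hf | hf
    · -- T1 : alive, go to D1, dies at second step, one more mono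
      rw [stepU1 f l2 l1 m r1 r2 htm hf] at hgb hfb hgc hfc ⊢
      have hdie : b (Step f (U1 (l2, l1, m, r1, r2))) ≤ B / 2 :=
        chainD1 f B l2 l1 (g (l2, l1, m, r1, r2)) m r1 h1 hgt htm h3 hfb
          (force1 l2 l1 m r1 r2 (g (l2, l1, m, r1, r2)) h1 h2 h3 h4)
          (by linarith)
          (by have := g_half_left l2 l1 m r1 r2 h1 h2 h3 h4; linarith)
      have hordz : Ordered5 (U1 (l2, l1, m, r1, r2)) := ⟨h1, hgt, htm, h3⟩
      have hordz2 : Ordered5 (Step f (U1 (l2, l1, m, r1, r2))) :=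
        ordStep f (U1 (l2, l1, m, r1, r2)) hordz hgb hfb
      have hmono := bStep_le f (Step f (U1 (l2, l1, m, r1, r2))) hordz2 hgc hfc
      linarith
    · -- T4 : dies via Q, two mono
      rw [stepU4 f l2 l1 m r1 r2 htm hf] at hgb hfb hgc hfc ⊢
      have hordz : Ordered5 (U4 (l2, l1, m, r1, r2)) := ⟨hgt, htm, h3, h4⟩
      have hordz2 : Ordered5 (Step f (U4 (l2, l1, m, r1, r2))) :=
        ordStep f (U4 (l2, l1, m, r1, r2)) hordz hgb hfb
      have hm1 := bStep_le f (U4 (l2, l1, m, r1, r2)) hordz hgb hfb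
      have hm2 := bStep_le f (Step f (U4 (l2, l1, m, r1, r2))) hordz2 hgc hfc
      have hb : b (U4 (l2, l1, m, r1, r2)) = r1 - g (l2, l1, m, r1, r2) := rfl
      have := g_half_right l2 l1 m r1 r2 h1 h2 h3 h4
      linarith
  · rcases lt_or_gt_of_ne hfa with hf | hf
    · -- T2 : alive, go to E, dies at second step, one more mono
      rw [stepU2 f l2 l1 m r1 r2 hmt hf] at hgb hfb hgc hfc ⊢
      have hdie : b (Step f (U2 (l2, l1, m, r1, r2))) ≤ B / 2 :=
        chainE f B l1 m (g (l2, l1, m, r1, r2)) r1 r2 h2 hmt hlt h4 hfb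
          (force2 l2 l1 m r1 r2 (g (l2, l1, m, r1, r2)) h1 h2 h3 h4)
          (by linarith)
          (by have := g_half_right l2 l1 m r1 r2 h1 h2 h3 h4; linarith)
      have hordz : Ordered5 (U2 (l2, l1, m, r1, r2)) := ⟨h2, hmt, hlt, h4⟩
      have hordz2 : Ordered5 (Step f (U2 (l2, l1, m, r1, r2))) :=
        ordStep f (U2 (l2, l1, m, r1, r2)) hordz hgb hfb
      have hmono := bStep_le f (Step f (U2 (l2, l1, m, r1, r2))) hordz2 hgc hfc
      linarith
    · -- T3 : dies via P, two mono
      rw [stepU3 f l2 l1 m r1 r2 hmt hf] at hgb hfb hgc hfc ⊢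
      have hordz : Ordered5 (U3 (l2, l1, m, r1, r2)) := ⟨h1, h2, hmt, hlt⟩
      have hordz2 : Ordered5 (Step f (U3 (l2, l1, m, r1, r2))) :=
        ordStep f (U3 (l2, l1, m, r1, r2)) hordz hgb hfb
      have hm1 := bStep_le f (U3 (l2, l1, m, r1, r2)) hordz hgb hfb
      have hm2 := bStep_le f (Step f (U3 (l2, l1, m, r1, r2))) hordz2 hgc hfc
      have hb : b (U3 (l2, l1, m, r1, r2)) = g (l2, l1, m, r1, r2) - l1 := rfl
      have := g_half_left l2 l1 m r1 r2 h1 h2 h3 h4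
      linarith

-- B1: flags (P, M1, b ≤ B), forced g < mid : dies in ≤ 3 steps
lemma chainB1 (f : ℝ → ℝ) (B l2 l1 m r1 r2 : ℝ)
    (h1 : l2 < l1) (h2 : l1 < m) (h3 : m < r1) (h4 : r1 < r2)
    (htm : g (l2, l1, m, r1, r2) < m) (hfa : f (g (l2, l1, m, r1, r2)) ≠ f m)
    (hgb : g (Step f (l2, l1, m, r1, r2)) ≠ mid (Step f (l2, l1, m, r1, r2)))
    (hfb : f (g (Step f (l2, l1, m, r1, r2))) ≠ f (mid (Step f (l2, l1, m, r1, r2))))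
    (hgc : g (Step f (Step f (l2, l1, m, r1, r2))) ≠ mid (Step f (Step f (l2, l1, m, r1, r2))))
    (hfc : f (g (Step f (Step f (l2, l1, m, r1, r2)))) ≠
      f (mid (Step f (Step f (l2, l1, m, r1, r2)))))
    (hby : r1 - l1 ≤ B) (hP : r2 - l1 ≤ B) (hM1 : m - l1 ≤ B / 2) :
    b (Step f (Step f (Step f (l2, l1, m, r1, r2)))) ≤ B / 2 := by
  have hgt := g_gt l2 l1 m r1 r2 h1 h2 h3 h4
  rcases lt_or_gt_of_ne hfa with hf | hf
  · -- T1 : dies via M1, two mono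
    rw [stepU1 f l2 l1 m r1 r2 htm hf] at hgb hfb hgc hfc ⊢
    have hordz : Ordered5 (U1 (l2, l1, m, r1, r2)) := ⟨h1, hgt, htm, h3⟩
    have hordz2 : Ordered5 (Step f (U1 (l2, l1, m, r1, r2))) :=
      ordStep f (U1 (l2, l1, m, r1, r2)) hordz hgb hfb
    have hm1 := bStep_le f (U1 (l2, l1, m, r1, r2)) hordz hgb hfb
    have hm2 := bStep_le f (Step f (U1 (l2, l1, m, r1, r2))) hordz2 hgc hfc
    have hb : b (U1 (l2, l1, m, r1, r2)) = m - l1 := rfl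
    linarith
  · -- T4 : alive, go to D4
    rw [stepU4 f l2 l1 m r1 r2 htm hf] at hgb hfb hgc hfc ⊢
    exact chainD4 f B l1 (g (l2, l1, m, r1, r2)) m r1 r2 hgt htm h3 h4 hgb hfb hgc hfc
      (by linarith) hby (by linarith)

-- B2: flags (Q, M2, b ≤ B), forced mid < g : dies in ≤ 3 steps
lemma chainB2 (f : ℝ → ℝ) (B l2 l1 m r1 r2 : ℝ)
    (h1 : l2 < l1) (h2 : l1 < m) (h3 : m < r1) (h4 : r1 < r2)
    (hmt : m < g (l2, l1, m, r1, r2)) (hfa : f (g (l2, l1, m, r1, r2)) ≠ f m)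
    (hgb : g (Step f (l2, l1, m, r1, r2)) ≠ mid (Step f (l2, l1, m, r1, r2)))
    (hfb : f (g (Step f (l2, l1, m, r1, r2))) ≠ f (mid (Step f (l2, l1, m, r1, r2))))
    (hgc : g (Step f (Step f (l2, l1, m, r1, r2))) ≠ mid (Step f (Step f (l2, l1, m, r1, r2))))
    (hfc : f (g (Step f (Step f (l2, l1, m, r1, r2)))) ≠
      f (mid (Step f (Step f (l2, l1, m, r1, r2)))))
    (hby : r1 - l1 ≤ B) (hQ : r1 - l2 ≤ B) (hM2 : r1 - m ≤ B / 2) :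
    b (Step f (Step f (Step f (l2, l1, m, r1, r2)))) ≤ B / 2 := by
  have hlt := g_lt l2 l1 m r1 r2 h1 h2 h3 h4
  rcases lt_or_gt_of_ne hfa with hf | hf
  · -- T2 : dies via M2, two mono
    rw [stepU2 f l2 l1 m r1 r2 hmt hf] at hgb hfb hgc hfc ⊢
    have hordz : Ordered5 (U2 (l2, l1, m, r1, r2)) := ⟨h2, hmt, hlt, h4⟩
    have hordz2 : Ordered5 (Step f (U2 (l2, l1, m, r1, r2))) :=
      ordStep f (U2 (l2, l1, m, r1, r2)) hordz hgb hfb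
    have hm1 := bStep_le f (U2 (l2, l1, m, r1, r2)) hordz hgb hfb
    have hm2 := bStep_le f (Step f (U2 (l2, l1, m, r1, r2))) hordz2 hgc hfc
    have hb : b (U2 (l2, l1, m, r1, r2)) = r1 - m := rfl
    linarith
  · -- T3 : alive, go to D3'
    rw [stepU3 f l2 l1 m r1 r2 hmt hf] at hgb hfb hgc hfc ⊢
    exact chainD3' f B l2 l1 m (g (l2, l1, m, r1, r2)) r1 h1 h2 hmt hlt hgb hfb hgc hfc
      hby (by linarith) (by linarith)

-- A: flags (P, b ≤ B) : dies in ≤ 4 steps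
lemma chainA (f : ℝ → ℝ) (B l2 l1 m r1 r2 : ℝ)
    (h1 : l2 < l1) (h2 : l1 < m) (h3 : m < r1) (h4 : r1 < r2)
    (hga : g (l2, l1, m, r1, r2) ≠ m) (hfa : f (g (l2, l1, m, r1, r2)) ≠ f m)
    (hgb : g (Step f (l2, l1, m, r1, r2)) ≠ mid (Step f (l2, l1, m, r1, r2)))
    (hfb : f (g (Step f (l2, l1, m, r1, r2))) ≠ f (mid (Step f (l2, l1, m, r1, r2))))
    (hgc : g (Step f (Step f (l2, l1, m, r1, r2))) ≠ mid (Step f (Step f (l2, l1, m, r1, r2))))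
    (hfc : f (g (Step f (Step f (l2, l1, m, r1, r2)))) ≠
      f (mid (Step f (Step f (l2, l1, m, r1, r2)))))
    (hgd : g (Step f (Step f (Step f (l2, l1, m, r1, r2)))) ≠
      mid (Step f (Step f (Step f (l2, l1, m, r1, r2)))))
    (hfd : f (g (Step f (Step f (Step f (l2, l1, m, r1, r2))))) ≠
      f (mid (Step f (Step f (Step f (l2, l1, m, r1, r2))))))
    (hby : r1 - l1 ≤ B) (hP : r2 - l1 ≤ B) :
    b (Step f (Step f (Step f (Step f (l2, l1, m, r1, r2))))) ≤ B / 2 := by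
  have hgt := g_gt l2 l1 m r1 r2 h1 h2 h3 h4
  have hlt := g_lt l2 l1 m r1 r2 h1 h2 h3 h4
  rcases lt_or_gt_of_ne hga with htm | hmt
  · rcases lt_or_gt_of_ne hfa with hf | hf
    · -- T1 : alive, go to B1
      rw [stepU1 f l2 l1 m r1 r2 htm hf] at hgb hfb hgc hfc hgd hfd ⊢
      exact chainB1 f B l2 l1 (g (l2, l1, m, r1, r2)) m r1 h1 hgt htm h3
        (force1 l2 l1 m r1 r2 (g (l2, l1, m, r1, r2)) h1 h2 h3 h4) hfb hgc hfc hgd hfd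
        (by linarith) hby
        (by have := g_half_left l2 l1 m r1 r2 h1 h2 h3 h4; linarith)
    · -- T4 : alive, go to C
      rw [stepU4 f l2 l1 m r1 r2 htm hf] at hgb hfb hgc hfc hgd hfd ⊢
      exact chainC f B l1 (g (l2, l1, m, r1, r2)) m r1 r2 hgt htm h3 h4
        hgb hfb hgc hfc hgd hfd (by linarith) hby
  · rcases lt_or_gt_of_ne hfa with hf | hf
    · -- T2 : alive, go to C
      rw [stepU2 f l2 l1 m r1 r2 hmt hf] at hgb hfb hgc hfc hgd hfd ⊢
      exact chainC f B l1 m (g (l2, l1, m, r1, r2)) r1 r2 h2 hmt hlt h4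
        hgb hfb hgc hfc hgd hfd (by linarith) hby
    · -- T3 : dies via P, three mono
      rw [stepU3 f l2 l1 m r1 r2 hmt hf] at hgb hfb hgc hfc hgd hfd ⊢
      have hordz : Ordered5 (U3 (l2, l1, m, r1, r2)) := ⟨h1, h2, hmt, hlt⟩
      have hordz2 : Ordered5 (Step f (U3 (l2, l1, m, r1, r2))) :=
        ordStep f (U3 (l2, l1, m, r1, r2)) hordz hgb hfb
      have hordz3 : Ordered5 (Step f (Step f (U3 (l2, l1, m, r1, r2)))) :=
        ordStep f (Step f (U3 (l2, l1, m, r1, r2))) hordz2 hgc hfc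
      have hm1 := bStep_le f (U3 (l2, l1, m, r1, r2)) hordz hgb hfb
      have hm2 := bStep_le f (Step f (U3 (l2, l1, m, r1, r2))) hordz2 hgc hfc
      have hm3 := bStep_le f (Step f (Step f (U3 (l2, l1, m, r1, r2)))) hordz3 hgd hfd
      have hb : b (U3 (l2, l1, m, r1, r2)) = g (l2, l1, m, r1, r2) - l1 := rfl
      have := g_half_left l2 l1 m r1 r2 h1 h2 h3 h4
      linarith

-- A': flags (Q, b ≤ B) : dies in ≤ 4 steps
lemma chainA' (f : ℝ → ℝ) (B l2 l1 m r1 r2 : ℝ)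
    (h1 : l2 < l1) (h2 : l1 < m) (h3 : m < r1) (h4 : r1 < r2)
    (hga : g (l2, l1, m, r1, r2) ≠ m) (hfa : f (g (l2, l1, m, r1, r2)) ≠ f m)
    (hgb : g (Step f (l2, l1, m, r1, r2)) ≠ mid (Step f (l2, l1, m, r1, r2)))
    (hfb : f (g (Step f (l2, l1, m, r1, r2))) ≠ f (mid (Step f (l2, l1, m, r1, r2))))
    (hgc : g (Step f (Step f (l2, l1, m, r1, r2))) ≠ mid (Step f (Step f (l2, l1, m, r1, r2))))
    (hfc : f (g (Step f (Step f (l2, l1, m, r1, r2)))) ≠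
      f (mid (Step f (Step f (l2, l1, m, r1, r2)))))
    (hgd : g (Step f (Step f (Step f (l2, l1, m, r1, r2)))) ≠
      mid (Step f (Step f (Step f (l2, l1, m, r1, r2)))))
    (hfd : f (g (Step f (Step f (Step f (l2, l1, m, r1, r2))))) ≠
      f (mid (Step f (Step f (Step f (l2, l1, m, r1, r2))))))
    (hby : r1 - l1 ≤ B) (hQ : r1 - l2 ≤ B) :
    b (Step f (Step f (Step f (Step f (l2, l1, m, r1, r2))))) ≤ B / 2 := by
  have hgt := g_gt l2 l1 m r1 r2 h1 h2 h3 h4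
  have hlt := g_lt l2 l1 m r1 r2 h1 h2 h3 h4
  rcases lt_or_gt_of_ne hga with htm | hmt
  · rcases lt_or_gt_of_ne hfa with hf | hf
    · -- T1 : alive, go to C
      rw [stepU1 f l2 l1 m r1 r2 htm hf] at hgb hfb hgc hfc hgd hfd ⊢
      exact chainC f B l2 l1 (g (l2, l1, m, r1, r2)) m r1 h1 hgt htm h3
        hgb hfb hgc hfc hgd hfd hby (by linarith)
    · -- T4 : dies via Q, three mono
      rw [stepU4 f l2 l1 m r1 r2 htm hf] at hgb hfb hgc hfc hgd hfd ⊢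
      have hordz : Ordered5 (U4 (l2, l1, m, r1, r2)) := ⟨hgt, htm, h3, h4⟩
      have hordz2 : Ordered5 (Step f (U4 (l2, l1, m, r1, r2))) :=
        ordStep f (U4 (l2, l1, m, r1, r2)) hordz hgb hfb
      have hordz3 : Ordered5 (Step f (Step f (U4 (l2, l1, m, r1, r2)))) :=
        ordStep f (Step f (U4 (l2, l1, m, r1, r2))) hordz2 hgc hfc
      have hm1 := bStep_le f (U4 (l2, l1, m, r1, r2)) hordz hgb hfb
      have hm2 := bStep_le f (Step f (U4 (l2, l1, m, r1, r2))) hordz2 hgc hfc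
      have hm3 := bStep_le f (Step f (Step f (U4 (l2, l1, m, r1, r2)))) hordz3 hgd hfd
      have hb : b (U4 (l2, l1, m, r1, r2)) = r1 - g (l2, l1, m, r1, r2) := rfl
      have := g_half_right l2 l1 m r1 r2 h1 h2 h3 h4
      linarith
  · rcases lt_or_gt_of_ne hfa with hf | hf
    · -- T2 : alive, go to B2
      rw [stepU2 f l2 l1 m r1 r2 hmt hf] at hgb hfb hgc hfc hgd hfd ⊢
      exact chainB2 f B l1 m (g (l2, l1, m, r1, r2)) r1 r2 h2 hmt hlt h4
        (force2 l2 l1 m r1 r2 (g (l2, l1, m, r1, r2)) h1 h2 h3 h4) hfb hgc hfc hgd hfd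
        (by linarith) hby
        (by have := g_half_right l2 l1 m r1 r2 h1 h2 h3 h4; linarith)
    · -- T3 : alive, go to C
      rw [stepU3 f l2 l1 m r1 r2 hmt hf] at hgb hfb hgc hfc hgd hfd ⊢
      exact chainC f B l2 l1 m (g (l2, l1, m, r1, r2)) r1 h1 h2 hmt hlt
        hgb hfb hgc hfc hgd hfd hby (by linarith)


theorem stmt13 (f : ℝ → ℝ) (x : ℕ → R5)
    (hx0 : ExtBracket5 f (x 0))
    (hstep : ∀ i < 5, x (i + 1) = Step f (x i))
    (hne : ∀ i < 5, g (x i) ≠ mid (x i) ∧ f (g (x i)) ≠ f (mid (x i))) :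
    b (x 5) ≤ b (x 0) / 2 := by
  have e1 : x 1 = Step f (x 0) := hstep 0 (by norm_num)
  have e2 : x 2 = Step f (x 1) := hstep 1 (by norm_num)
  have e3 : x 3 = Step f (x 2) := hstep 2 (by norm_num)
  have e4 : x 4 = Step f (x 3) := hstep 3 (by norm_num)
  have e5 : x 5 = Step f (x 4) := hstep 4 (by norm_num)
  have hne0 := hne 0 (by norm_num)
  have hne1 := hne 1 (by norm_num)
  have hne2 := hne 2 (by norm_num)
  have hne3 := hne 3 (by norm_num)
  have hne4 := hne 4 (by norm_num)
  obtain ⟨hord0, -, -⟩ := hx0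
  rcases hEq : x 0 with ⟨l2, l1, m, r1, r2⟩
  rw [hEq] at hord0 e1 hne0
  obtain ⟨h1, h2, h3, h4⟩ := hord0
  replace h1 : l2 < l1 := h1
  replace h2 : l1 < m := h2
  replace h3 : m < r1 := h3
  replace h4 : r1 < r2 := h4
  rw [e5, e4, e3, e2, e1]
  rw [e1] at hne1
  rw [e2, e1] at hne2
  rw [e3, e2, e1] at hne3
  rw [e4, e3, e2, e1] at hne4
  obtain ⟨hga, hfa⟩ := hne0
  obtain ⟨hgb, hfb⟩ := hne1
  obtain ⟨hgc, hfc⟩ := hne2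
  obtain ⟨hgd, hfd⟩ := hne3
  obtain ⟨hge, hfe⟩ := hne4
  have hm : mid (l2, l1, m, r1, r2) = m := rfl
  rw [hm] at hga hfa
  have hgt := g_gt l2 l1 m r1 r2 h1 h2 h3 h4
  have hlt := g_lt l2 l1 m r1 r2 h1 h2 h3 h4
  show b (Step f (Step f (Step f (Step f (Step f (l2, l1, m, r1, r2)))))) ≤ (r1 - l1) / 2
  rcases lt_or_gt_of_ne hga with htm | hmt
  · rcases lt_or_gt_of_ne hfa with hf | hf
    · -- T1 : go to A
      rw [stepU1 f l2 l1 m r1 r2 htm hf] at hgb hfb hgc hfc hgd hfd hge hfe ⊢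
      exact chainA f (r1 - l1) l2 l1 (g (l2, l1, m, r1, r2)) m r1 h1 hgt htm h3
        hgb hfb hgc hfc hgd hfd hge hfe (by linarith) le_rfl
    · -- T4 : go to A'
      rw [stepU4 f l2 l1 m r1 r2 htm hf] at hgb hfb hgc hfc hgd hfd hge hfe ⊢
      exact chainA' f (r1 - l1) l1 (g (l2, l1, m, r1, r2)) m r1 r2 hgt htm h3 h4
        hgb hfb hgc hfc hgd hfd hge hfe (by linarith) le_rfl
  · rcases lt_or_gt_of_ne hfa with hf | hf
    · -- T2 : go to A'
      rw [stepU2 f l2 l1 m r1 r2 hmt hf] at hgb hfb hgc hfc hgd hfd hge hfe ⊢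
      exact chainA' f (r1 - l1) l1 m (g (l2, l1, m, r1, r2)) r1 r2 h2 hmt hlt h4
        hgb hfb hgc hfc hgd hfd hge hfe (by linarith) le_rfl
    · -- T3 : go to A
      rw [stepU3 f l2 l1 m r1 r2 hmt hf] at hgb hfb hgc hfc hgd hfd hge hfe ⊢
      exact chainA f (r1 - l1) l2 l1 m (g (l2, l1, m, r1, r2)) r1 h1 h2 hmt hlt
        hgb hfb hgc hfc hgd hfd hge hfe (by linarith) le_rfl
end

section
/- Let f : ℝ → ℝ and let x₀ ∈ ℝ^5 be an extended 5-bracket for f. Define x₁ = Step_f(x₀) and x₂ = Step_f(x₁), with t_i = g(x_i) and m_i the middle component of x_i. If both iterations are of type 4, i.e. t_i < m_i and f(t_i) > f(m_i) for i = 0 and i = 1, then b(x₂) ≤ b(x₀)/2. -/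
theorem stmt14 (f : ℝ → ℝ) (x0 x1 x2 : R5)
    (hx0 : ExtBracket5 f x0)
    (hstep1 : x1 = Step f x0) (hstep2 : x2 = Step f x1)
    (htype0 : g x0 < mid x0 ∧ f (g x0) > f (mid x0))
    (htype1 : g x1 < mid x1 ∧ f (g x1) > f (mid x1)) :
    b x2 ≤ b x0 / 2 := by
  obtain ⟨l2, l1, m, r1, r2⟩ := x0
  obtain ⟨⟨h1, h2, h3, h4⟩, hb1, hb2⟩ := hx0
  rw [Step, if_pos htype0.1, if_neg (not_lt.mpr htype0.2.le)] at hstep1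
  subst hstep1
  rw [Step, if_pos htype1.1, if_neg (not_lt.mpr htype1.2.le)] at hstep2
  subst hstep2
  simp only [U4, g, b, mid] at *
  set t0 : ℝ := (r1 * r2 - l1 * l2) / (r1 + r2 - l1 - l2) with ht0
  have hD0 : (0:ℝ) < r1 + r2 - l1 - l2 := by linarith
  have ht0l : l1 < t0 := by
    rw [ht0, lt_div_iff₀ hD0]
    nlinarith [mul_pos (show (0:ℝ) < r1 - l1 by linarith) (show (0:ℝ) < r2 - l1 by linarith)]
  have ht0r : t0 < r1 := by
    rw [ht0, div_lt_iff₀ hD0]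
    nlinarith [mul_pos (show (0:ℝ) < r1 - l1 by linarith) (show (0:ℝ) < r1 - l2 by linarith)]
  have hD1 : (0:ℝ) < r1 + r2 - t0 - l1 := by linarith
  have heq : r1 - (r1 * r2 - t0 * l1) / (r1 + r2 - t0 - l1)
      = (r1 - t0) * (r1 - l1) / (r1 + r2 - t0 - l1) := by
    field_simp
    ring
  rw [heq, div_le_div_iff₀ hD1 two_pos]
  nlinarith [mul_pos (show (0:ℝ) < r1 - l1 by linarith) (show (0:ℝ) < r2 - l1 - (r1 - t0) by linarith)]
end

section
/- Let f : ℝ → ℝ and let x₀ ∈ ℝ^5 be an extended 5-bracket for f. Define x_{i+1} = Step_f(x_i) for i = 0, 1, 2, with t_i = g(x_i) and m_i the middle component of x_i. If all three iterations are of type 1, i.e. t_i < m_i and f(t_i) < f(m_i) for i = 0, 1, 2, then b(x₃) ≤ b(x₀)/2. -/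
theorem stmt15 (f : ℝ → ℝ) (x0 x1 x2 x3 : R5)
    (hx0 : ExtBracket5 f x0)
    (hstep1 : x1 = Step f x0) (hstep2 : x2 = Step f x1) (hstep3 : x3 = Step f x2)
    (htype0 : g x0 < mid x0 ∧ f (g x0) < f (mid x0))
    (htype1 : g x1 < mid x1 ∧ f (g x1) < f (mid x1))
    (htype2 : g x2 < mid x2 ∧ f (g x2) < f (mid x2)) :
    b x3 ≤ b x0 / 2 := by
  have e1 : x1 = U1 x0 := by
    rw [hstep1, Step, if_pos htype0.1, if_pos htype0.2]
  have e2 : x2 = U1 x1 := by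
    rw [hstep2, Step, if_pos htype1.1, if_pos htype1.2]
  have e3 : x3 = U1 x2 := by
    rw [hstep3, Step, if_pos htype2.1, if_pos htype2.2]
  subst e3 e2 e1
  obtain ⟨l2, l1, m, r1, r2⟩ := x0
  obtain ⟨⟨h1, h2, h3, h4⟩, -, -⟩ := hx0
  simp only [Ordered5] at h1 h2 h3 h4
  simp only [b, U1, g, mid]
  have hD : (0:ℝ) < m + r1 - l1 - l2 := by linarith
  rw [sub_le_iff_le_add, div_le_iff₀ hD]
  nlinarith [mul_pos (show (0:ℝ) < r1 - l1 by linarith)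
    (show (0:ℝ) < (r1 - l2) - (m - l1) by linarith)]
end

section
/- Let f : ℝ → ℝ be twice continuously differentiable, let x1 ≠ x2 be real numbers, and let ζ ∈ ℝ. Then there exist ξ1 ∈ [min(x1, ζ), max(x1, ζ)] and ξ2 ∈ [min(x2, ζ), max(x2, ζ)] such that f[x1,x2] = f'(ζ) + ((x1 − ζ)·f''(ξ1) + (x2 − ζ)·f''(ξ2))/2. -/
open Set

private lemma my_facts {f : ℝ → ℝ} (hf : ContDiff ℝ 2 f) :
    Differentiable ℝ f ∧ Differentiable ℝ (deriv f) ∧ Continuous (deriv (deriv f)) := by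
  have h2 : ContDiff ℝ (1+1 : ℕ) f := by exact_mod_cast hf
  have h1 : ContDiff ℝ 1 (deriv f) := (contDiff_succ_iff_deriv.mp (by exact_mod_cast h2)).2.2
  exact ⟨hf.differentiable (by norm_num), h1.differentiable one_ne_zero, h1.continuous_deriv le_rfl⟩

/-- Second-order Taylor with Lagrange remainder, both directions. -/
private lemma my_taylor {f : ℝ → ℝ} (hd1 : Differentiable ℝ f) (hd2 : Differentiable ℝ (deriv f))
    {a b : ℝ} (hab : a ≠ b) :
    ∃ c ∈ Ioo (min a b) (max a b),
      f b = f a + deriv f a * (b - a) + deriv (deriv f) c * (b - a) ^ 2 / 2 := by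
  have hba : (b - a) ^ 2 ≠ 0 := pow_ne_zero _ (sub_ne_zero.mpr (Ne.symm hab))
  set M := (f b - f a - deriv f a * (b - a)) * 2 / (b - a) ^ 2 with hM
  set φ := fun t => f b - f t - deriv f t * (b - t) - M * (b - t) ^ 2 / 2 with hφ
  have hder : ∀ t, HasDerivAt φ ((b - t) * (M - deriv (deriv f) t)) t := by
    intro t
    have h1 : HasDerivAt f (deriv f t) t := (hd1 t).hasDerivAt
    have h2 : HasDerivAt (deriv f) (deriv (deriv f) t) t := (hd2 t).hasDerivAt
    have h3 : HasDerivAt (fun t => b - t) (-1) t := by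
      simpa using (hasDerivAt_id t).const_sub b
    have h4 : HasDerivAt (fun t => deriv f t * (b - t))
        (deriv (deriv f) t * (b - t) + deriv f t * (-1)) t := h2.mul h3
    have h5 : HasDerivAt (fun t => M * (b - t) ^ 2 / 2)
        (M * ((2 : ℕ) * (b - t) ^ 1 * (-1)) / 2) t := ((h3.pow 2).const_mul M).div_const 2
    have h6 := (((hasDerivAt_const t (f b)).sub h1).sub h4).sub h5
    refine h6.congr_deriv ?_
    push_cast
    ring
  have hb0 : φ b = 0 := by simp [hφ]
  have ha0 : φ a = 0 := by
    simp only [hφ, hM]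
    field_simp
    ring
  have hends : φ (min a b) = φ (max a b) := by
    rcases le_total a b with h | h
    · rw [min_eq_left h, max_eq_right h, ha0, hb0]
    · rw [min_eq_right h, max_eq_left h, ha0, hb0]
  have hmm : min a b < max a b := min_lt_max.mpr hab
  obtain ⟨c, hc, hc0⟩ := exists_hasDerivAt_eq_zero hmm
    (fun t _ => (hder t).continuousAt.continuousWithinAt) hends (fun t ht => hder t)
  refine ⟨c, hc, ?_⟩
  have hbc : b - c ≠ 0 := by
    rcases le_total a b with h | h
    · rw [max_eq_right h] at hc; exact sub_ne_zero.mpr hc.2.ne'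
    · rw [min_eq_right h] at hc; exact sub_ne_zero.mpr (hc.1.ne)
  have hMc : deriv (deriv f) c = M := by
    rcases mul_eq_zero.mp hc0 with h | h
    · exact absurd h hbc
    · linarith
  rw [hMc, hM]
  field_simp
  ring

/-- Mean value theorem for `deriv f`, allowing `a = b`. -/
private lemma my_mvt {f : ℝ → ℝ} (hd2 : Differentiable ℝ (deriv f))
    {a b : ℝ} (hab : a ≤ b) :
    ∃ c ∈ Icc a b, deriv f b - deriv f a = deriv (deriv f) c * (b - a) := by
  rcases eq_or_lt_of_le hab with rfl | h
  · exact ⟨a, ⟨le_rfl, le_rfl⟩, by simp⟩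
  · obtain ⟨c, hc, hc'⟩ := exists_hasDerivAt_eq_slope (deriv f) (deriv (deriv f)) h
      (hd2.continuous.continuousOn) (fun x _ => (hd2 x).hasDerivAt)
    refine ⟨c, Ioo_subset_Icc_self hc, ?_⟩
    rw [hc', div_mul_cancel₀ _ (sub_ne_zero.mpr h.ne')]

/-- IVT: a convex combination of two values of a continuous function is attained. -/
private lemma my_ivt {g : ℝ → ℝ} (hg : Continuous g) {u v t : ℝ} (ht0 : 0 ≤ t) (ht1 : t ≤ 1) :
    ∃ ξ ∈ uIcc u v, g ξ = t * g u + (1 - t) * g v := by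
  have hmem : t * g u + (1 - t) * g v ∈ uIcc (g u) (g v) := by
    rcases le_total (g u) (g v) with h | h
    · rw [uIcc_of_le h]
      constructor <;> nlinarith
    · rw [uIcc_of_ge h]
      constructor <;> nlinarith
  obtain ⟨ξ, hξ, hgξ⟩ := intermediate_value_uIcc hg.continuousOn hmem
  exact ⟨ξ, hξ, hgξ⟩

private lemma my_key (f : ℝ → ℝ) (hf : ContDiff ℝ 2 f) (x1 x2 ζ : ℝ) (h21 : x2 < x1) :
    ∃ ξ1 ∈ Set.Icc (min x1 ζ) (max x1 ζ), ∃ ξ2 ∈ Set.Icc (min x2 ζ) (max x2 ζ),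
      dd2 f x1 x2 = deriv f ζ +
        ((x1 - ζ) * deriv (deriv f) ξ1 + (x2 - ζ) * deriv (deriv f) ξ2) / 2 := by
  obtain ⟨hd1, hd2, hg⟩ := my_facts hf
  have h12 : x1 - x2 ≠ 0 := sub_ne_zero.mpr h21.ne'
  rcases le_or_gt ζ x2 with hc1 | hmid
  -- Case ζ ≤ x2 < x1
  · have hζ1 : ζ < x1 := lt_of_le_of_lt hc1 h21
    obtain ⟨ξa, hξa, hTa⟩ := my_taylor hd1 hd2 (a := x2) (b := x1) h21.ne
    rw [min_eq_left h21.le, max_eq_right h21.le] at hξa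
    obtain ⟨ξb, hξb, hMb⟩ := my_mvt hd2 (a := ζ) (b := x2) hc1
    have hA : (0:ℝ) < x1 - ζ := by linarith
    have ht0 : (0:ℝ) ≤ (x2 - ζ) / (x1 - ζ) := div_nonneg (by linarith) hA.le
    have ht1 : (x2 - ζ) / (x1 - ζ) ≤ 1 := (div_le_one hA).mpr (by linarith)
    obtain ⟨ξ1, hξ1, hgξ1⟩ := my_ivt hg (u := ξb) (v := ξa) ht0 ht1
    have hsub : uIcc ξb ξa ⊆ Icc ζ x1 := uIcc_subset_Icc
      ⟨hξb.1, le_trans hξb.2 h21.le⟩ ⟨le_trans hc1 hξa.1.le, hξa.2.le⟩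
    refine ⟨ξ1, ?_, ξb, ?_, ?_⟩
    · rw [min_eq_right hζ1.le, max_eq_left hζ1.le]; exact hsub hξ1
    · rw [min_eq_right hc1, max_eq_left hc1]; exact hξb
    · have key1 : (x1 - ζ) * deriv (deriv f) ξ1
          = (x2 - ζ) * deriv (deriv f) ξb + (x1 - x2) * deriv (deriv f) ξa := by
        rw [hgξ1]; field_simp; ring
      rw [dd2, div_eq_iff h12]
      linear_combination hTa + (x1 - x2) * hMb - ((x1 - x2)/2) * key1
  rcases le_or_gt x1 ζ with hc3 | hmid2
  -- Case x2 < x1 ≤ ζ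
  · have hζ2 : x2 < ζ := lt_of_lt_of_le h21 hc3
    obtain ⟨ξa, hξa, hTa⟩ := my_taylor hd1 hd2 (a := x1) (b := x2) h21.ne'
    rw [min_eq_right h21.le, max_eq_left h21.le] at hξa
    obtain ⟨ξb, hξb, hMb⟩ := my_mvt hd2 (a := x1) (b := ζ) hc3
    have hB : (0:ℝ) < ζ - x2 := by linarith
    have hBne : x2 - ζ ≠ 0 := by linarith
    have heq : (x1 - ζ) / (x2 - ζ) = (ζ - x1) / (ζ - x2) := by
      rw [div_eq_div_iff (by linarith) (by linarith)]; ring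
    have ht0 : (0:ℝ) ≤ (x1 - ζ) / (x2 - ζ) := by
      rw [heq]; exact div_nonneg (by linarith) hB.le
    have ht1 : (x1 - ζ) / (x2 - ζ) ≤ 1 := by
      rw [heq]; exact (div_le_one hB).mpr (by linarith)
    obtain ⟨ξ2, hξ2, hgξ2⟩ := my_ivt hg (u := ξb) (v := ξa) ht0 ht1
    have hsub : uIcc ξb ξa ⊆ Icc x2 ζ := uIcc_subset_Icc
      ⟨le_trans h21.le hξb.1, hξb.2⟩ ⟨hξa.1.le, le_trans hξa.2.le hc3⟩
    refine ⟨ξb, ?_, ξ2, ?_, ?_⟩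
    · rw [min_eq_left hc3, max_eq_right hc3]; exact hξb
    · rw [min_eq_left hζ2.le, max_eq_right hζ2.le]; exact hsub hξ2
    · have key2 : (x2 - ζ) * deriv (deriv f) ξ2
          = (x1 - ζ) * deriv (deriv f) ξb + (x2 - x1) * deriv (deriv f) ξa := by
        rw [hgξ2]; field_simp; ring
      rw [dd2, div_eq_iff h12]
      linear_combination -hTa - (x1 - x2) * hMb - ((x1 - x2)/2) * key2
  -- Case x2 < ζ < x1
  · obtain ⟨ξa, hξa, hTa⟩ := my_taylor hd1 hd2 (a := ζ) (b := x1) hmid2.ne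
    rw [min_eq_left hmid2.le, max_eq_right hmid2.le] at hξa
    obtain ⟨ξb, hξb, hTb⟩ := my_taylor hd1 hd2 (a := ζ) (b := x2) hmid.ne'
    rw [min_eq_right hmid.le, max_eq_left hmid.le] at hξb
    have ht0 : (0:ℝ) ≤ (x1 - ζ) / (x1 - x2) := div_nonneg (by linarith) (by linarith)
    have ht1 : (x1 - ζ) / (x1 - x2) ≤ 1 := (div_le_one (by linarith)).mpr (by linarith)
    have hs0 : (0:ℝ) ≤ (ζ - x2) / (x1 - x2) := div_nonneg (by linarith) (by linarith)
    have hs1 : (ζ - x2) / (x1 - x2) ≤ 1 := (div_le_one (by linarith)).mpr (by linarith)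
    obtain ⟨ξ1, hξ1, hgξ1⟩ := my_ivt hg (u := ξa) (v := ζ) ht0 ht1
    obtain ⟨ξ2, hξ2, hgξ2⟩ := my_ivt hg (u := ξb) (v := ζ) hs0 hs1
    have hsub1 : uIcc ξa ζ ⊆ Icc ζ x1 := uIcc_subset_Icc
      ⟨hξa.1.le, hξa.2.le⟩ ⟨le_rfl, hmid2.le⟩
    have hsub2 : uIcc ξb ζ ⊆ Icc x2 ζ := uIcc_subset_Icc
      ⟨hξb.1.le, hξb.2.le⟩ ⟨hmid.le, le_rfl⟩
    refine ⟨ξ1, ?_, ξ2, ?_, ?_⟩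
    · rw [min_eq_right hmid2.le, max_eq_left hmid2.le]; exact hsub1 hξ1
    · rw [min_eq_left hmid.le, max_eq_right hmid.le]; exact hsub2 hξ2
    · have key1 : (x1 - x2) * deriv (deriv f) ξ1
          = (x1 - ζ) * deriv (deriv f) ξa + (ζ - x2) * deriv (deriv f) ζ := by
        rw [hgξ1]; field_simp; ring
      have key2 : (x1 - x2) * deriv (deriv f) ξ2
          = (ζ - x2) * deriv (deriv f) ξb + (x1 - ζ) * deriv (deriv f) ζ := by
        rw [hgξ2]; field_simp; ring
      rw [dd2, div_eq_iff h12]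
      linear_combination hTa - hTb - ((x1 - ζ)/2) * key1 - ((x2 - ζ)/2) * key2

theorem stmt17 (f : ℝ → ℝ) (hf : ContDiff ℝ 2 f) (x1 x2 ζ : ℝ) (hx : x1 ≠ x2) :
    ∃ ξ1 ∈ Set.Icc (min x1 ζ) (max x1 ζ), ∃ ξ2 ∈ Set.Icc (min x2 ζ) (max x2 ζ),
      dd2 f x1 x2 = deriv f ζ +
        ((x1 - ζ) * deriv (deriv f) ξ1 + (x2 - ζ) * deriv (deriv f) ξ2) / 2 := by
  have hswap : dd2 f x1 x2 = dd2 f x2 x1 := by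
    rw [dd2, dd2, ← neg_sub (f x2), ← neg_sub x2, neg_div_neg_eq]
  rcases lt_or_gt_of_ne hx with h | h
  · obtain ⟨ξ1, h1, ξ2, h2, heq⟩ := my_key f hf x2 x1 ζ h
    exact ⟨ξ2, h2, ξ1, h1, by rw [hswap, heq]; ring⟩
  · exact my_key f hf x1 x2 ζ h
end

section
/- For every ordered 5-tuple x = (l2, l1, m, r1, r2) ∈ ℝ^5, the EUPM step lies strictly inside the inner bracket: l1 < g(x) < r1. More precisely, g(x) − l1 = (r1 − l1)(r2 − l1)/(r1 + r2 − l1 − l2) and r1 − g(x) = (r1 − l1)(r1 − l2)/(r1 + r2 − l1 − l2), and both quantities are positive. -/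
theorem stmt18 (x : R5) (hx : Ordered5 x) :
    (x.2.1 < g x ∧ g x < x.2.2.2.1) ∧
    g x - x.2.1 = (x.2.2.2.1 - x.2.1) * (x.2.2.2.2 - x.2.1) /
        (x.2.2.2.1 + x.2.2.2.2 - x.2.1 - x.1) ∧
    x.2.2.2.1 - g x = (x.2.2.2.1 - x.2.1) * (x.2.2.2.1 - x.1) /
        (x.2.2.2.1 + x.2.2.2.2 - x.2.1 - x.1) ∧
    0 < g x - x.2.1 ∧ 0 < x.2.2.2.1 - g x := by
  obtain ⟨l2, l1, m, r1, r2⟩ := x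
  obtain ⟨h1, h2, h3, h4⟩ := hx
  simp only [g] at *
  have hd : (0:ℝ) < r1 + r2 - l1 - l2 := by linarith
  have hd' : r1 + r2 - l1 - l2 ≠ 0 := ne_of_gt hd
  have he1 : (r1 * r2 - l1 * l2) / (r1 + r2 - l1 - l2) - l1 =
      (r1 - l1) * (r2 - l1) / (r1 + r2 - l1 - l2) := by
    field_simp; ring
  have he2 : r1 - (r1 * r2 - l1 * l2) / (r1 + r2 - l1 - l2) =
      (r1 - l1) * (r1 - l2) / (r1 + r2 - l1 - l2) := by
    field_simp; ring
  have hp1 : 0 < (r1 - l1) * (r2 - l1) / (r1 + r2 - l1 - l2) :=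
    div_pos (mul_pos (by linarith) (by linarith)) hd
  have hp2 : 0 < (r1 - l1) * (r1 - l2) / (r1 + r2 - l1 - l2) :=
    div_pos (mul_pos (by linarith) (by linarith)) hd
  refine ⟨⟨by linarith [he1.symm ▸ hp1], by linarith [he2.symm ▸ hp2]⟩, he1, he2, by linarith [he1.symm ▸ hp1], by linarith [he2.symm ▸ hp2]⟩
end
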